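/- arXiv:2111.02579 — 13 statements merged into one kernel-verified Lean document; each statement's English description precedes it below -/
import Mathlib

section
/- Let a reallocation instance be given in which d⁺(w) > 0 and d⁻(w) > 0 for every w ∈ W. Define ρ(w) = max( ⌈(∑_{p∈P⁺(w)} size(p)) / d⁺(w)⌉ , ⌈(∑_{p∈P⁻(w)} size(p)) / d⁻(w)⌉ ) and ρ_max = max_{w∈W} ρ(w). Then every schedule φ that satisfies the carry-out and carry-in constraints has completion time max_{p∈P}(φ(p) + τ(p)) ≥ ρ_max + min_{p∈P} τ(p) − 1. -/
open Finset

/-! If the last product arrives at time `T` and every transit takes at least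
`m = min τ` steps, then all departures happen in `[0, T - m]` and all arrivals in `[m, T]`,
two windows of `T - m + 1` time steps. Since a warehouse `w` ships at most `d⁺(w)` and receives
at most `d⁻(w)` per step, both of its loads fit into `T - m + 1` steps, i.e. `ρ(w) ≤ T - m + 1`. -/

theorem Finset.sum_le_card_nsmul_of_sum_fiber_le {ι κ M : Type*} [DecidableEq κ]
    [AddCommMonoid M] [PartialOrder M] [IsOrderedAddMonoid M] (s : Finset ι) (I : Finset κ)
    (f : ι → κ) (g : ι → M) (d : M) (hf : ∀ i ∈ s, f i ∈ I)
    (hd : ∀ θ, ∑ i ∈ s with f i = θ, g i ≤ d) :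
    ∑ i ∈ s, g i ≤ #I • d := by
  rw [← sum_fiberwise_of_maps_to hf]
  exact sum_le_card_nsmul I _ d fun θ _ => hd θ

theorem Finset.ceil_sum_div_le_card_of_sum_fiber_le {ι κ K : Type*} [DecidableEq κ] [Field K]
    [LinearOrder K] [IsStrictOrderedRing K] [FloorRing K] (s : Finset ι) (I : Finset κ)
    (f : ι → κ) (g : ι → K) {d : K} (hd_pos : 0 < d) (hf : ∀ i ∈ s, f i ∈ I)
    (hd : ∀ θ, ∑ i ∈ s with f i = θ, g i ≤ d) :
    ⌈(∑ i ∈ s, g i) / d⌉ ≤ #I := by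
  rw [Int.ceil_le, div_le_iff₀ hd_pos, Int.cast_natCast, ← nsmul_eq_mul]
  exact sum_le_card_nsmul_of_sum_fiber_le s I f g d hf hd

theorem stmt_0_general {P W : Type*} [Fintype P] [Nonempty P] [Fintype W] [Nonempty W] [DecidableEq W]
    (s t : P → W)
    (size : P → ℝ)
    (τ : P → ℕ)
    (dout din : W → ℝ) (hdout : ∀ w, 0 < dout w) (hdin : ∀ w, 0 < din w)
    (φ : P → ℕ)
    (hout : ∀ (w : W) (θ : ℕ),
      ∑ p ∈ univ.filter (fun p => s p = w ∧ φ p = θ), size p ≤ dout w)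
    (hin : ∀ (w : W) (θ : ℕ),
      ∑ p ∈ univ.filter (fun p => t p = w ∧ φ p + τ p = θ), size p ≤ din w) :
    (univ.sup' univ_nonempty (fun w =>
        max ⌈(∑ p ∈ univ.filter (fun p => s p = w), size p) / dout w⌉
            ⌈(∑ p ∈ univ.filter (fun p => t p = w), size p) / din w⌉))
      + ((univ.inf' univ_nonempty τ : ℕ) : ℤ) - 1
      ≤ ((univ.sup' univ_nonempty (fun p => φ p + τ p) : ℕ) : ℤ) := by
  set T := univ.sup' univ_nonempty (fun p => φ p + τ p)
  set m := univ.inf' univ_nonempty τ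
  have hm : ∀ p, m ≤ τ p := fun p => inf'_le _ (mem_univ p)
  have hT : ∀ p, φ p + τ p ≤ T := fun p => le_sup' (fun p => φ p + τ p) (mem_univ p)
  have hmT : m ≤ T := (hm (Classical.arbitrary P)).trans ((Nat.le_add_left _ _).trans (hT _))
  have hdepart : ∀ w, ∀ p ∈ univ.filter (fun p => s p = w), φ p ∈ range (T + 1 - m) :=
    fun _ p _ => mem_range.2 (by have := hm p; have := hT p; omega)
  have harrive : ∀ w, ∀ p ∈ univ.filter (fun p => t p = w), φ p + τ p ∈ Icc m T :=
    fun _ p _ => mem_Icc.2 ⟨(hm p).trans (Nat.le_add_left _ _), hT p⟩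
  have hload : ∀ w, max ⌈(∑ p ∈ univ.filter (fun p => s p = w), size p) / dout w⌉
      ⌈(∑ p ∈ univ.filter (fun p => t p = w), size p) / din w⌉ ≤ ((T + 1 - m : ℕ) : ℤ) := by
    intro w
    refine max_le ?_ ?_
    · simpa using ceil_sum_div_le_card_of_sum_fiber_le _ _ _ size (hdout w) (hdepart w)
        fun θ => by simpa only [filter_filter] using hout w θ
    · simpa using ceil_sum_div_le_card_of_sum_fiber_le _ _ _ size (hdin w) (harrive w)
        fun θ => by simpa only [filter_filter] using hin w θ
  have hρ := sup'_le univ_nonempty _ fun w _ => hload w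
  omega

/-- general lower bound on the completion time of any schedule
satisfying the carry-out and carry-in constraints. -/
theorem stmt_0 {P W : Type*} [Fintype P] [Nonempty P] [Fintype W] [Nonempty W] [DecidableEq W]
    (s t : P → W) (hst : ∀ p, s p ≠ t p)
    (size : P → ℝ) (hsize : ∀ p, 0 ≤ size p)
    (τ : P → ℕ) (hτ : ∀ p, 1 ≤ τ p)
    (dout din : W → ℝ) (hdout : ∀ w, 0 < dout w) (hdin : ∀ w, 0 < din w)
    (φ : P → ℕ)
    (hout : ∀ (w : W) (θ : ℕ),
      ∑ p ∈ univ.filter (fun p => s p = w ∧ φ p = θ), size p ≤ dout w)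
    (hin : ∀ (w : W) (θ : ℕ),
      ∑ p ∈ univ.filter (fun p => t p = w ∧ φ p + τ p = θ), size p ≤ din w) :
    (univ.sup' univ_nonempty (fun w =>
        max ⌈(∑ p ∈ univ.filter (fun p => s p = w), size p) / dout w⌉
            ⌈(∑ p ∈ univ.filter (fun p => t p = w), size p) / din w⌉))
      + ((univ.inf' univ_nonempty τ : ℕ) : ℤ) - 1
      ≤ ((univ.sup' univ_nonempty (fun p => φ p + τ p) : ℕ) : ℤ) :=
  stmt_0_general s t size τ dout din hdout hdin φ hout hin
end

section
/- Let P be a finite nonempty set, W a finite set, and s, t : P → W maps with s(p) ≠ t(p) for every p ∈ P. Suppose that |{p ∈ P : s(p) = w}| = |{p ∈ P : t(p) = w}| for every w ∈ W, and let K = max_{w∈W} |{p ∈ P : s(p) = w}|. Then P can be partitioned into K (possibly empty) sets P₁, …, P_K such that for each i: the map s is injective on P_i, the map t is injective on P_i, and {s(p) : p ∈ P_i} = {t(p) : p ∈ P_i} (equivalently, the directed edges {(s(p), t(p)) : p ∈ P_i} form a family of vertex-disjoint simple directed cycles on W). -/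
/-!
Pad the demand graph with `K - |s⁻¹(w)|` loops at every warehouse `w`. By the balance condition
the resulting bipartite multigraph (sources on one side, targets on the other) is `K`-regular, so
by Hall's theorem it has a perfect matching; removing it leaves a `(K - 1)`-regular multigraph,
and induction splits the edges into `K` perfect matchings. In a perfect matching every
warehouse is hit exactly once as a source and once as a target, so on the real products of a
matching `s` and `t` are injective and both images are the set of warehouses without a loop in
that matching.
-/

open Finset

section RegularBipartite

variable {Q U V : Type*} {f : Q → U} {g : Q → V} {S : Finset Q} {K : ℕ}

theorem card_filter_mem_eq_mul [DecidableEq U] (hf : ∀ u, #{q ∈ S | f q = u} = K)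
    (A : Finset U) : #{q ∈ S | f q ∈ A} = K * #A := by
  rw [← sum_card_fiberwise_eq_card_filter, sum_congr rfl fun u _ => hf u, sum_const, smul_eq_mul,
    mul_comm]

theorem bijOn_univ_iff_card_filter_eq_one [DecidableEq U] :
    Set.BijOn f S Set.univ ↔ ∀ u, #{q ∈ S | f q = u} = 1 := by
  simp only [card_eq_one, Set.BijOn, Set.mapsTo_univ, true_and, Set.InjOn, Set.SurjOn,
    Set.univ_subset_iff, Set.eq_univ_iff_forall, Set.mem_image, mem_coe,
    eq_singleton_iff_unique_mem, mem_filter]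
  constructor
  · rintro ⟨hinj, hsurj⟩ u
    obtain ⟨q, hq, rfl⟩ := hsurj u
    exact ⟨q, ⟨hq, rfl⟩, fun r hr => hinj hr.1 hq hr.2⟩
  · intro h
    refine ⟨fun a ha b hb hab => ?_, fun u => ?_⟩
    · obtain ⟨q, -, hq⟩ := h (f a)
      exact (hq a ⟨ha, rfl⟩).trans (hq b ⟨hb, hab.symm⟩).symm
    · obtain ⟨q, ⟨hq, rfl⟩, -⟩ := h u
      exact ⟨q, hq, rfl⟩

theorem card_filter_sdiff_eq_of_bijOn [DecidableEq Q] [DecidableEq U] {M : Finset Q}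
    (hf : ∀ u, #{q ∈ S | f q = u} = K + 1) (hMS : M ⊆ S) (hM : Set.BijOn f M Set.univ) (u : U) :
    #{q ∈ S \ M | f q = u} = K := by
  have hsplit : {q ∈ S \ M | f q = u} = {q ∈ S | f q = u} \ {q ∈ M | f q = u} := by
    ext q; simp only [mem_filter, mem_sdiff]; tauto
  rw [hsplit, card_sdiff_of_subset (filter_subset_filter _ hMS), hf,
    bijOn_univ_iff_card_filter_eq_one.mp hM, Nat.add_sub_cancel]

theorem exists_bijOn_bijOn_of_regular [Fintype U] [Fintype V] [DecidableEq U] [DecidableEq V]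
    (hK : 0 < K) (hf : ∀ u, #{q ∈ S | f q = u} = K) (hg : ∀ v, #{q ∈ S | g q = v} = K) :
    ∃ M ⊆ S, Set.BijOn f M Set.univ ∧ Set.BijOn g M Set.univ := by
  set r : U → V → Prop := fun u v => ∃ q ∈ S, f q = u ∧ g q = v
  -- Hall's condition: the `K * #A` edges at `A` all end in the neighbourhood of `A`.
  have hall : ∀ A : Finset U, #A ≤ #{v | ∃ u ∈ A, r u v} := fun A => by
    refine le_of_mul_le_mul_left ?_ hK
    rw [← card_filter_mem_eq_mul hf, ← card_filter_mem_eq_mul hg]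
    refine card_le_card fun q hq => ?_
    simp only [mem_filter] at hq ⊢
    exact ⟨hq.1, by simpa using ⟨f q, hq.2, q, hq.1, rfl, rfl⟩⟩
  obtain ⟨τ, hτ, hr⟩ := (Fintype.all_card_le_filter_rel_iff_exists_injective r).mp hall
  choose m hmS hmf hmg using hr
  have hcard : Fintype.card U = Fintype.card V := by
    have hU := card_filter_mem_eq_mul hf univ
    have hV := card_filter_mem_eq_mul hg univ
    simp only [mem_univ, filter_true, card_univ] at hU hV
    exact Nat.eq_of_mul_eq_mul_left hK (hU.symm.trans hV)
  have hτ' : τ.Bijective := (Fintype.bijective_iff_injective_and_card τ).mpr ⟨hτ, hcard⟩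
  have hm : m.Injective := fun a b hab => by rw [← hmf a, ← hmf b, hab]
  refine ⟨univ.map ⟨m, hm⟩, by simpa [map_subset_iff_subset_preimage, subset_iff] using hmS,
    ?_, ?_⟩
  all_goals rw [coe_map, Function.Embedding.coeFn_mk, coe_univ, ← Set.bijOn_comp_iff hm.injOn,
    Set.bijOn_univ]
  · convert Function.bijective_id
    exact funext hmf
  · convert hτ'
    exact funext hmg

theorem exists_fin_succ_bijOn_of_regular [DecidableEq Q] [Fintype U] [Fintype V] [DecidableEq U]
    [DecidableEq V] (hf : ∀ u, #{q ∈ S | f q = u} = K + 1) (hg : ∀ v, #{q ∈ S | g q = v} = K + 1) :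
    ∃ ψ : Q → Fin (K + 1), ∀ i,
      Set.BijOn f {q ∈ S | ψ q = i} Set.univ ∧ Set.BijOn g {q ∈ S | ψ q = i} Set.univ := by
  induction K generalizing S with
  | zero =>
    refine ⟨0, fun i => ?_⟩
    simp only [Fin.fin_one_eq_zero i, Pi.zero_apply, and_true, setOfPred_mem]
    exact ⟨bijOn_univ_iff_card_filter_eq_one.mpr hf, bijOn_univ_iff_card_filter_eq_one.mpr hg⟩
  | succ K ih =>
    obtain ⟨M, hMS, hMf, hMg⟩ := exists_bijOn_bijOn_of_regular (Nat.succ_pos _) hf hg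
    obtain ⟨ψ, hψ⟩ := ih (card_filter_sdiff_eq_of_bijOn hf hMS hMf)
      (card_filter_sdiff_eq_of_bijOn hg hMS hMg)
    refine ⟨fun q => if q ∈ M then Fin.last _ else (ψ q).castSucc, Fin.lastCases ?_ fun j => ?_⟩ <;>
      beta_reduce
    · have hclass : ({q ∈ S | (if q ∈ M then Fin.last _ else (ψ q).castSucc) = Fin.last (K + 1)} :
          Set Q) = M := by
        ext q
        by_cases hq : q ∈ M
        · simp [hq, hMS hq]
        · simp [hq, Fin.castSucc_ne_last]
      rw [hclass]
      exact ⟨hMf, hMg⟩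
    · have hclass : ({q ∈ S | (if q ∈ M then Fin.last _ else (ψ q).castSucc) = j.castSucc} :
          Set Q) = {q | q ∈ S \ M ∧ ψ q = j} := by
        ext q
        by_cases hq : q ∈ M <;> simp [hq, (Fin.castSucc_ne_last j).symm]
      rw [hclass]
      exact hψ j

theorem exists_fin_bijOn_of_regular [Fintype Q] [Fintype U] [Fintype V] [DecidableEq U]
    [DecidableEq V] (hf : ∀ u, #{q | f q = u} = K) (hg : ∀ v, #{q | g q = v} = K) :
    ∃ ψ : Q → Fin K, ∀ i,
      Set.BijOn f {q | ψ q = i} Set.univ ∧ Set.BijOn g {q | ψ q = i} Set.univ := by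
  classical
  cases K with
  | zero =>
    have : IsEmpty Q := ⟨fun q => by
      have hq := hf (f q)
      rw [card_eq_zero, filter_eq_empty_iff] at hq
      exact hq (mem_univ q) rfl⟩
    exact ⟨isEmptyElim, fun i => i.elim0⟩
  | succ K => simpa using exists_fin_succ_bijOn_of_regular hf hg

end RegularBipartite

theorem card_filter_sumElim_sigma_fst {P W : Type*} [Fintype P] [Fintype W] [DecidableEq W]
    (h : P → W) (d : W → ℕ) (w : W) :
    #{q : P ⊕ Σ v, Fin (d v) | Sum.elim h Sigma.fst q = w} = #{p | h p = w} + d w := by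
  have hfiber : ({q | Sum.elim h Sigma.fst q = w} : Finset (P ⊕ Σ v, Fin (d v))) =
      ({p | h p = w} : Finset P).disjSum (({w} : Finset W).sigma fun _ => univ) := by
    ext (p | r) <;> simp
  rw [hfiber, card_disjSum, card_sigma, sum_singleton, card_univ, Fintype.card_fin]

theorem Set.BijOn.image_preimage_inl_eq_compl {P R W : Type*} {h : P → W} {k : R → W}
    {C : Set (P ⊕ R)} (hC : Set.BijOn (Sum.elim h k) C Set.univ) :
    h '' (Sum.inl ⁻¹' C) = (k '' (Sum.inr ⁻¹' C))ᶜ := by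
  refine eq_compl_iff_isCompl.mpr ⟨Set.disjoint_left.mpr ?_, codisjoint_iff.mpr ?_⟩
  · rintro _ ⟨p, hp, rfl⟩ ⟨r, hr, hpr⟩
    exact Sum.inl_ne_inr (hC.injOn hp hr hpr.symm)
  · exact (Set.image_sumElim C h k).symm.trans hC.image_eq

theorem stmt_2_general {P W : Type*} [Fintype P] [Fintype W] [DecidableEq W]
    (s t : P → W)
    (hbal : ∀ w : W,
      (univ.filter (fun p => s p = w)).card = (univ.filter (fun p => t p = w)).card) :
    ∃ ψ : P → Fin (univ.sup (fun w : W => (univ.filter (fun p => s p = w)).card)),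
      ∀ i, Set.InjOn s {p | ψ p = i} ∧ Set.InjOn t {p | ψ p = i} ∧
        s '' {p | ψ p = i} = t '' {p | ψ p = i} := by
  set K := univ.sup fun w : W => #{p | s p = w}
  have hpad : ∀ w, #{p | s p = w} + (K - #{p | s p = w}) = K := fun w =>
    Nat.add_sub_cancel' (le_sup (f := fun w : W => #{p | s p = w}) (mem_univ w))
  obtain ⟨φ, hφ⟩ := exists_fin_bijOn_of_regular
    (f := Sum.elim s (Sigma.fst : (Σ w, Fin (K - #{p | s p = w})) → W)) (g := Sum.elim t Sigma.fst)
    (fun w => (card_filter_sumElim_sigma_fst s _ w).trans (hpad w))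
    (fun w => (card_filter_sumElim_sigma_fst t _ w).trans (hbal w ▸ hpad w))
  refine ⟨fun p => φ (.inl p), fun i => ?_⟩
  obtain ⟨hs, ht⟩ := hφ i
  exact ⟨hs.injOn.comp Sum.inl_injective.injOn (fun _ h => h),
    ht.injOn.comp Sum.inl_injective.injOn (fun _ h => h),
    hs.image_preimage_inl_eq_compl.trans ht.image_preimage_inl_eq_compl.symm⟩

/-- if every warehouse has equally many outgoing and incoming
products, the product set can be partitioned into `K = max_w |P⁺(w)|` parts,
each of which forms vertex-disjoint simple cycles in the demand graph
(i.e. `s` and `t` are injective on each part and have the same image there). -/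
theorem stmt_2 {P W : Type*} [Fintype P] [Nonempty P] [Fintype W] [DecidableEq W]
    (s t : P → W) (hst : ∀ p, s p ≠ t p)
    (hbal : ∀ w : W,
      (univ.filter (fun p => s p = w)).card = (univ.filter (fun p => t p = w)).card) :
    ∃ ψ : P → Fin (univ.sup (fun w : W => (univ.filter (fun p => s p = w)).card)),
      ∀ i, Set.InjOn s {p | ψ p = i} ∧ Set.InjOn t {p | ψ p = i} ∧
        s '' {p | ψ p = i} = t '' {p | ψ p = i} :=
  stmt_2_general s t hbal
end

section
/- Let a reallocation instance be given satisfying size(p) ≤ d⁺(s(p)) and size(p) ≤ d⁻(t(p)) for every p ∈ P, let m = |P|, and let T ∈ ℕ. A fractional schedule for horizon T is a function x : P × ℕ → ℝ with x(p,θ) ≥ 0 for all p, θ; x(p,θ) = 0 whenever θ + τ(p) > T; ∑_{θ∈ℕ} x(p,θ) = 1 for every p ∈ P; ∑_{p∈P⁺(w)} size(p)·x(p,θ) ≤ d⁺(w) for every w ∈ W and θ ∈ ℕ; and ∑_{p∈P⁻(w), τ(p) ≤ θ} size(p)·x(p, θ−τ(p)) ≤ d⁻(w) for every w ∈ W and θ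 ∈ ℕ. If a fractional schedule for horizon T exists, then there exists a fractional schedule x* for horizon T satisfying additionally x*(p,θ) = 0 for every p ∈ P and every θ ≥ 2m. -/
open Finset

/-!
Take a fractional schedule minimising the total start time `∑ p θ, θ * x p θ`; it exists because
the feasible schedules form a compact set. Suppose it still sends mass of `q` at some `θ₂ ≥ 2m`.
Since every product fits alone into the capacities, double counting shows that fewer than `m`
times `θ < 2m` saturate the carry-out capacity of `s q`, and fewer than `m` saturate the carry-in
capacity of `t q` at `θ + τ q`. So some `θ₁ < 2m` has slack in both, and shifting a little of the
mass of `q` from `θ₂` to `θ₁` gives a feasible schedule with smaller total start time.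
-/

/-- A fractional schedule for horizon `T`: a feasible solution of the linear
relaxation of the time-indexed formulation of the reallocation problem
(carry-out and carry-in constraints only). -/
def FracSchedule {P W : Type*} [Fintype P] [DecidableEq W]
    (s t : P → W) (size : P → ℝ) (τ : P → ℕ) (dout din : W → ℝ) (T : ℕ)
    (x : P → ℕ → ℝ) : Prop :=
  (∀ (p : P) (θ : ℕ), 0 ≤ x p θ) ∧
  (∀ (p : P) (θ : ℕ), T < θ + τ p → x p θ = 0) ∧
  (∀ p : P, ∑' θ : ℕ, x p θ = 1) ∧
  (∀ (w : W) (θ : ℕ),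
      ∑ p ∈ univ.filter (fun p => s p = w), size p * x p θ ≤ dout w) ∧
  (∀ (w : W) (θ : ℕ),
      ∑ p ∈ univ.filter (fun p => t p = w ∧ τ p ≤ θ), size p * x p (θ - τ p) ≤ din w)

section Loads

variable {P W : Type*} [Fintype P] [DecidableEq W]

def outLoad (s : P → W) (size : P → ℝ) (x : P → ℕ → ℝ) (w : W) (θ : ℕ) : ℝ :=
  ∑ p ∈ univ.filter (fun p => s p = w), size p * x p θ

def inLoad (t : P → W) (size : P → ℝ) (τ : P → ℕ) (x : P → ℕ → ℝ) (w : W) (σ : ℕ) : ℝ :=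
  ∑ p ∈ univ.filter (fun p => t p = w ∧ τ p ≤ σ), size p * x p (σ - τ p)

theorem inLoad_eq_sum_ite (t : P → W) (size : P → ℝ) (τ : P → ℕ) (x : P → ℕ → ℝ) (w : W)
    (σ : ℕ) :
    inLoad t size τ x w σ =
      ∑ p ∈ univ.filter (fun p => t p = w), size p * if τ p ≤ σ then x p (σ - τ p) else 0 := by
  simp only [inLoad, ← filter_filter, sum_filter, mul_ite, mul_zero]

end Loads

def startTimeSum {P : Type*} [Fintype P] (T : ℕ) (x : P → ℕ → ℝ) : ℝ :=
  ∑ p, ∑ θ ∈ range (T + 1), (θ : ℝ) * x p θ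

theorem add_single_apply {P : Type*} [DecidableEq P] (x : P → ℕ → ℝ) (q : P) (δ : ℕ → ℝ)
    (p : P) (θ : ℕ) : (x + Pi.single q δ : P → ℕ → ℝ) p θ = x p θ + if p = q then δ θ else 0 := by
  simp [Pi.single_apply, ite_apply]

theorem startTimeSum_add_single {P : Type*} [Fintype P] [DecidableEq P] (T : ℕ)
    (x : P → ℕ → ℝ) (q : P) (δ : ℕ → ℝ) :
    startTimeSum T (x + Pi.single q δ) =
      startTimeSum T x + ∑ θ ∈ range (T + 1), (θ : ℝ) * δ θ := by
  simp only [startTimeSum, add_single_apply, mul_add, sum_add_distrib]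
  congr 1
  rw [Fintype.sum_eq_single q fun p hp => by simp [hp]]
  simp

theorem sum_mul_add_ite_eq {ι R : Type*} [DecidableEq ι] [NonUnitalNonAssocSemiring R]
    (F : Finset ι) (a f c : ι → R) (q : ι) :
    ∑ p ∈ F, a p * (f p + if p = q then c p else 0) =
      ∑ p ∈ F, a p * f p + if q ∈ F then a q * c q else 0 := by
  simp [mul_add, sum_add_distrib, mul_ite]

theorem single_sub_single_le {α : Type*} [DecidableEq α] (a b : α) {ε : ℝ} (hε : 0 ≤ ε)
    (i : α) : (Pi.single a ε - Pi.single b ε : α → ℝ) i ≤ if i = a then ε else 0 := by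
  simp only [Pi.sub_apply, Pi.single_apply]
  split_ifs <;> linarith

/-- The total load over `B` is below `#F * d`: each `z p` has mass at most `1`, and the mass
`z q σ₀` lies outside `B`. -/
theorem card_lt_card_of_forall_le_sum_mul {ι : Type*} {F : Finset ι} {a : ι → ℝ}
    {z : ι → ℕ → ℝ} {d : ℝ} {B : Finset ℕ} (ha : ∀ p ∈ F, 0 ≤ a p) (had : ∀ p ∈ F, a p ≤ d)
    (hz : ∀ p ∈ F, ∀ C : Finset ℕ, ∑ σ ∈ C, z p σ ≤ 1) {q : ι} (hq : q ∈ F) (haq : 0 < a q)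
    {σ₀ : ℕ} (hσ₀ : σ₀ ∉ B) (hzq : 0 < z q σ₀) (hB : ∀ σ ∈ B, d ≤ ∑ p ∈ F, a p * z p σ) :
    #B < #F := by
  classical
  have hzqB : ∑ σ ∈ B, z q σ ≤ 1 - z q σ₀ := by
    have := hz q hq (insert σ₀ B)
    rw [sum_insert hσ₀] at this
    linarith
  have hlt : (#B : ℝ) * d < #F * d := calc
    (#B : ℝ) * d = ∑ σ ∈ B, d := by simp
    _ ≤ ∑ σ ∈ B, ∑ p ∈ F, a p * z p σ := sum_le_sum hB
    _ = ∑ p ∈ F, a p * ∑ σ ∈ B, z p σ := by rw [sum_comm]; simp only [mul_sum]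
    _ = a q * ∑ σ ∈ B, z q σ + ∑ p ∈ F.erase q, a p * ∑ σ ∈ B, z p σ :=
      (add_sum_erase F _ hq).symm
    _ ≤ a q * (1 - z q σ₀) + ∑ p ∈ F.erase q, a p :=
      add_le_add (mul_le_mul_of_nonneg_left hzqB haq.le) <| sum_le_sum fun p hp =>
        mul_le_of_le_one_right (ha p (mem_of_mem_erase hp)) (hz p (mem_of_mem_erase hp) B)
    _ < ∑ p ∈ F, a p := by
      rw [← add_sum_erase F _ hq]
      nlinarith [mul_pos haq hzq]
    _ ≤ #F * d := by simpa using sum_le_sum had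
  exact_mod_cast lt_of_mul_lt_mul_right hlt (haq.le.trans (had q hq))

namespace FracSchedule

variable {P W : Type*} [Fintype P] [DecidableEq W] {s t : P → W} {size : P → ℝ} {τ : P → ℕ}
  {dout din : W → ℝ} {T : ℕ} {x : P → ℕ → ℝ}

theorem nonneg (hx : FracSchedule s t size τ dout din T x) (p : P) (θ : ℕ) : 0 ≤ x p θ :=
  hx.1 p θ

theorem eq_zero_of_lt_add (hx : FracSchedule s t size τ dout din T x) {p : P} {θ : ℕ}
    (h : T < θ + τ p) : x p θ = 0 :=
  hx.2.1 p θ h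

theorem eq_zero_of_lt (hx : FracSchedule s t size τ dout din T x) {p : P} {θ : ℕ} (h : T < θ) :
    x p θ = 0 :=
  hx.eq_zero_of_lt_add (by omega)

theorem tsum_eq_one (hx : FracSchedule s t size τ dout din T x) (p : P) : ∑' θ, x p θ = 1 :=
  hx.2.2.1 p

theorem outLoad_le (hx : FracSchedule s t size τ dout din T x) (w : W) (θ : ℕ) :
    outLoad s size x w θ ≤ dout w :=
  hx.2.2.2.1 w θ

theorem inLoad_le (hx : FracSchedule s t size τ dout din T x) (w : W) (σ : ℕ) :
    inLoad t size τ x w σ ≤ din w :=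
  hx.2.2.2.2 w σ

theorem summable (hx : FracSchedule s t size τ dout din T x) (p : P) : Summable (x p) :=
  summable_of_ne_finset_zero (s := range (T + 1)) fun _ hθ =>
    hx.eq_zero_of_lt (by simpa using hθ)

theorem sum_range_eq_one (hx : FracSchedule s t size τ dout din T x) (p : P) :
    ∑ θ ∈ range (T + 1), x p θ = 1 := by
  rw [← hx.tsum_eq_one p, tsum_eq_sum (s := range (T + 1))]
  exact fun _ hθ => hx.eq_zero_of_lt (by simpa using hθ)

theorem sum_le_one (hx : FracSchedule s t size τ dout din T x) (p : P) (C : Finset ℕ) :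
    ∑ θ ∈ C, x p θ ≤ 1 :=
  hx.tsum_eq_one p ▸ (hx.summable p).sum_le_tsum C fun θ _ => hx.nonneg p θ

theorem sum_delayed_le_one (hx : FracSchedule s t size τ dout din T x) (p : P) (k : ℕ)
    (C : Finset ℕ) : ∑ σ ∈ C, (if k ≤ σ then x p (σ - k) else 0) ≤ 1 := by
  rw [← sum_filter, ← sum_image (f := x p) (g := (· - k))]
  · exact hx.sum_le_one p _
  · intro a ha b hb hab
    simp only [coe_filter, Set.mem_ofPred_eq] at ha hb hab
    omega

theorem setOf_eq_sum_range :
    {x | FracSchedule s t size τ dout din T x} =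
      {x | (∀ p θ, 0 ≤ x p θ) ∧ (∀ p θ, T < θ + τ p → x p θ = 0) ∧
        (∀ p, ∑ θ ∈ range (T + 1), x p θ = 1) ∧ (∀ w θ, outLoad s size x w θ ≤ dout w) ∧
        ∀ w σ, inLoad t size τ x w σ ≤ din w} := by
  ext x
  refine ⟨fun hx => ⟨hx.1, hx.2.1, hx.sum_range_eq_one, hx.2.2.2⟩, ?_⟩
  rintro ⟨h0, hT, h1, hout, hin⟩
  refine ⟨h0, hT, fun p => ?_, hout, hin⟩
  rw [tsum_eq_sum (s := range (T + 1)), h1 p]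
  exact fun θ hθ => hT p θ (by simp at hθ; omega)

/-- In the product topology the feasible schedules form a closed subset of `[0, 1] ^ (P × ℕ)`:
the only non-closed-looking constraint, `∑' θ, x p θ = 1`, is a finite sum on that set. -/
theorem isCompact_setOf : IsCompact {x | FracSchedule s t size τ dout din T x} := by
  refine (isCompact_univ_pi fun _ => isCompact_univ_pi fun _ => isCompact_Icc (a := (0 : ℝ))
    (b := 1)).of_isClosed_subset ?_ fun x hx => ?_
  · rw [setOf_eq_sum_range]
    simp only [Set.ofPred_and, Set.ofPred_forall, outLoad, inLoad]
    repeat' first | apply IsClosed.inter | apply isClosed_iInter; intro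
    all_goals first
      | exact isClosed_le (by fun_prop) (by fun_prop)
      | exact isClosed_eq (by fun_prop) (by fun_prop)
  · simp only [Set.mem_univ_pi, Set.mem_Icc]
    exact fun p θ => ⟨hx.nonneg p θ, by simpa using hx.sum_le_one p {θ}⟩

theorem exists_isMinOn_startTimeSum (hex : ∃ x, FracSchedule s t size τ dout din T x) :
    ∃ x ∈ {x | FracSchedule s t size τ dout din T x},
      IsMinOn (startTimeSum T) {x | FracSchedule s t size τ dout din T x} x :=
  isCompact_setOf.exists_isMinOn hex (by unfold startTimeSum; fun_prop)

theorem add_single [DecidableEq P] (hx : FracSchedule s t size τ dout din T x) {q : P}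
    {δ : ℕ → ℝ} (hδ : HasSum δ 0) (h0 : ∀ θ, 0 ≤ x q θ + δ θ)
    (hT : ∀ θ, T < θ + τ q → δ θ = 0)
    (hout : ∀ θ, outLoad s size x (s q) θ + size q * δ θ ≤ dout (s q))
    (hin : ∀ θ, inLoad t size τ x (t q) (θ + τ q) + size q * δ θ ≤ din (t q)) :
    FracSchedule s t size τ dout din T (x + Pi.single q δ) := by
  refine ⟨fun p θ => ?_, fun p θ hpθ => ?_, fun p => ?_, fun w θ => ?_, fun w σ => ?_⟩
  · rw [add_single_apply]
    split_ifs with hp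
    · exact hp ▸ h0 θ
    · simpa using hx.nonneg p θ
  · rw [add_single_apply, hx.eq_zero_of_lt_add hpθ]
    split_ifs with hp
    · subst hp
      simpa using hT θ hpθ
    · simp
  · rcases eq_or_ne p q with rfl | hp
    · simpa [hx.tsum_eq_one p] using ((hx.summable p).hasSum.add hδ).tsum_eq
    · simpa [Pi.single_eq_of_ne hp] using hx.tsum_eq_one p
  · simp only [add_single_apply]
    rw [sum_mul_add_ite_eq _ size (x · θ) (fun _ => δ θ)]
    split_ifs with hq
    · obtain rfl : s q = w := by simpa using hq
      exact hout θ
    · rw [add_zero]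
      exact hx.outLoad_le w θ
  · simp only [add_single_apply]
    rw [sum_mul_add_ite_eq _ size (fun p => x p (σ - τ p)) (fun p => δ (σ - τ p))]
    split_ifs with hq
    · obtain ⟨rfl, hσ⟩ : t q = w ∧ τ q ≤ σ := by simpa using hq
      have := hin (σ - τ q)
      rwa [Nat.sub_add_cancel hσ] at this
    · rw [add_zero]
      exact hx.inLoad_le w σ

theorem exists_lt_outLoad_lt_inLoad_lt (hx : FracSchedule s t size τ dout din T x)
    (hsize : ∀ p, 0 ≤ size p) (hout0 : ∀ p, size p ≤ dout (s p))
    (hin0 : ∀ p, size p ≤ din (t p)) {q : P} {θ₂ : ℕ} (hq : 0 < size q)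
    (hθ₂ : 2 * Fintype.card P ≤ θ₂) (hpos : 0 < x q θ₂) :
    ∃ θ₁ < 2 * Fintype.card P, outLoad s size x (s q) θ₁ < dout (s q) ∧
      inLoad t size τ x (t q) (θ₁ + τ q) < din (t q) := by
  set m := Fintype.card P
  set Bout := (range (2 * m)).filter fun θ => dout (s q) ≤ outLoad s size x (s q) θ
  set Bin := (range (2 * m)).filter fun θ => din (t q) ≤ inLoad t size τ x (t q) (θ + τ q)
  have hθ₂B (B : Finset ℕ) (hB : B ⊆ range (2 * m)) : θ₂ ∉ B := fun h => by
    have := mem_range.1 (hB h)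
    omega
  have hBout : #Bout < m := by
    refine (card_lt_card_of_forall_le_sum_mul (F := univ.filter (s · = s q))
      (fun p _ => hsize p) (fun p hp => ?_) (fun p _ => hx.sum_le_one p) (by simp) hq
      (hθ₂B _ (filter_subset _ _)) hpos fun θ hθ => (mem_filter.1 hθ).2).trans_le
      (card_le_univ _)
    rw [← (mem_filter.1 hp).2]
    exact hout0 p
  have hBin : #Bin < m := by
    refine (card_lt_card_of_forall_le_sum_mul (F := univ.filter (t · = t q)) (d := din (t q))
      (z := fun p θ => if τ p ≤ θ + τ q then x p (θ + τ q - τ p) else 0)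
      (fun p _ => hsize p) (fun p hp => ?_) (fun p _ C => ?_) (by simp) hq
      (hθ₂B _ (filter_subset _ _)) (by simpa using hpos) fun θ hθ => ?_).trans_le
      (card_le_univ _)
    · rw [← (mem_filter.1 hp).2]
      exact hin0 p
    · simpa using hx.sum_delayed_le_one p (τ p) (C.map (addRightEmbedding (τ q)))
    · rw [← inLoad_eq_sum_ite]
      exact (mem_filter.1 hθ).2
  obtain ⟨θ₁, hθ₁, hθ₁B⟩ : ∃ θ₁ ∈ range (2 * m), θ₁ ∉ Bout ∪ Bin := by
    by_contra! h
    have := (card_le_card h).trans (card_union_le Bout Bin)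
    simp only [card_range] at this
    omega
  simp only [Bout, Bin, mem_union, mem_filter, not_or, not_and, not_le] at hθ₁B
  exact ⟨θ₁, mem_range.1 hθ₁, hθ₁B.1 hθ₁, hθ₁B.2 hθ₁⟩

theorem exists_earlier_slack (hx : FracSchedule s t size τ dout din T x)
    (hsize : ∀ p, 0 ≤ size p) (hout0 : ∀ p, size p ≤ dout (s p))
    (hin0 : ∀ p, size p ≤ din (t p)) {q : P} {θ₂ : ℕ} (hθ₂ : 2 * Fintype.card P ≤ θ₂)
    (hpos : 0 < x q θ₂) :
    ∃ θ₁ < 2 * Fintype.card P, ∃ ε > 0, ε ≤ x q θ₂ ∧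
      outLoad s size x (s q) θ₁ + size q * ε ≤ dout (s q) ∧
      inLoad t size τ x (t q) (θ₁ + τ q) + size q * ε ≤ din (t q) := by
  rcases (hsize q).eq_or_lt with hq | hq
  · have : 0 < Fintype.card P := Fintype.card_pos_iff.2 ⟨q⟩
    refine ⟨0, by omega, x q θ₂, hpos, le_rfl, ?_, ?_⟩
    · simpa [← hq] using hx.outLoad_le (s q) 0
    · simpa [← hq] using hx.inLoad_le (t q) (0 + τ q)
  obtain ⟨θ₁, hθ₁, hout, hin⟩ := hx.exists_lt_outLoad_lt_inLoad_lt hsize hout0 hin0 hq hθ₂ hpos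
  set rout := dout (s q) - outLoad s size x (s q) θ₁
  set rin := din (t q) - inLoad t size τ x (t q) (θ₁ + τ q)
  have hε_out : min (x q θ₂) (min (rout / size q) (rin / size q)) ≤ rout / size q :=
    (min_le_right _ _).trans (min_le_left _ _)
  have hε_in : min (x q θ₂) (min (rout / size q) (rin / size q)) ≤ rin / size q :=
    (min_le_right _ _).trans (min_le_right _ _)
  rw [le_div_iff₀' hq] at hε_out hε_in
  refine ⟨θ₁, hθ₁, _, ?_, min_le_left _ _, by linarith, by linarith⟩
  exact lt_min hpos (lt_min (div_pos (sub_pos.2 hout) hq) (div_pos (sub_pos.2 hin) hq))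

/-- Shift mass `ε` of `q` from `θ₂` to an earlier slot `θ₁` with slack. -/
theorem exists_lt_startTimeSum (hx : FracSchedule s t size τ dout din T x)
    (hsize : ∀ p, 0 ≤ size p) (hout0 : ∀ p, size p ≤ dout (s p))
    (hin0 : ∀ p, size p ≤ din (t p)) {q : P} {θ₂ : ℕ} (hθ₂ : 2 * Fintype.card P ≤ θ₂)
    (hpos : 0 < x q θ₂) :
    ∃ y, FracSchedule s t size τ dout din T y ∧ startTimeSum T y < startTimeSum T x := by
  classical
  obtain ⟨θ₁, hθ₁, ε, hε, hεx, hout, hin⟩ := hx.exists_earlier_slack hsize hout0 hin0 hθ₂ hpos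
  have h₁₂ : θ₁ < θ₂ := hθ₁.trans_le hθ₂
  have h₂T : θ₂ + τ q ≤ T := by
    by_contra h
    exact hpos.ne' (hx.eq_zero_of_lt_add (by omega))
  set δ : ℕ → ℝ := Pi.single θ₁ ε - Pi.single θ₂ ε
  have hδ_le := single_sub_single_le θ₁ θ₂ hε.le
  refine ⟨x + Pi.single q δ, hx.add_single ?_ ?_ ?_ ?_ ?_, ?_⟩
  · rw [← sub_self ε]
    exact (hasSum_pi_single θ₁ ε).sub (hasSum_pi_single θ₂ ε)
  · intro θ
    simp only [δ, Pi.sub_apply, Pi.single_apply]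
    split_ifs <;> subst_vars <;> first | omega | linarith [hx.nonneg q θ]
  · intro θ hθ
    simp only [δ, Pi.sub_apply, Pi.single_apply]
    rw [if_neg (by omega), if_neg (by omega), sub_zero]
  · intro θ
    have := mul_le_mul_of_nonneg_left (hδ_le θ) (hsize q)
    split_ifs at this with h
    · subst h
      linarith
    · linarith [hx.outLoad_le (s q) θ]
  · intro θ
    have := mul_le_mul_of_nonneg_left (hδ_le θ) (hsize q)
    split_ifs at this with h
    · subst h
      linarith
    · linarith [hx.inLoad_le (t q) (θ + τ q)]
  · have : (θ₁ : ℝ) < θ₂ := by exact_mod_cast h₁₂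
    rw [startTimeSum_add_single]
    simp only [δ, Pi.sub_apply, mul_sub, sum_sub_distrib, Pi.single_apply, mul_ite, mul_zero,
      sum_ite_eq', mem_range]
    rw [if_pos (by omega), if_pos (by omega)]
    nlinarith

end FracSchedule

theorem stmt_7_general {P W : Type*} [Fintype P] [DecidableEq W]
    (s t : P → W)
    (size : P → ℝ) (hsize : ∀ p, 0 ≤ size p)
    (τ : P → ℕ)
    (dout din : W → ℝ)
    (hout0 : ∀ p, size p ≤ dout (s p)) (hin0 : ∀ p, size p ≤ din (t p))
    (T : ℕ)
    (hex : ∃ x : P → ℕ → ℝ, FracSchedule s t size τ dout din T x) :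
    ∃ x : P → ℕ → ℝ, FracSchedule s t size τ dout din T x ∧
      ∀ (p : P) (θ : ℕ), 2 * Fintype.card P ≤ θ → x p θ = 0 := by
  obtain ⟨x, hx, hmin⟩ := FracSchedule.exists_isMinOn_startTimeSum hex
  refine ⟨x, hx, fun q θ hθ => ?_⟩
  by_contra hne
  obtain ⟨y, hy, hlt⟩ :=
    hx.exists_lt_startTimeSum hsize hout0 hin0 hθ ((hx.nonneg q θ).lt_of_ne' hne)
  exact (hmin hy).not_gt hlt

/-- if a fractional schedule for horizon `T` exists, then there is
one which moreover sends nothing at any time `θ ≥ 2m`, where `m = |P|`. -/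
theorem stmt_7 {P W : Type*} [Fintype P] [Nonempty P] [Fintype W] [DecidableEq W]
    (s t : P → W) (hst : ∀ p, s p ≠ t p)
    (size : P → ℝ) (hsize : ∀ p, 0 ≤ size p)
    (τ : P → ℕ) (hτ : ∀ p, 1 ≤ τ p)
    (dout din : W → ℝ)
    (hout0 : ∀ p, size p ≤ dout (s p)) (hin0 : ∀ p, size p ≤ din (t p))
    (T : ℕ)
    (hex : ∃ x : P → ℕ → ℝ, FracSchedule s t size τ dout din T x) :
    ∃ x : P → ℕ → ℝ, FracSchedule s t size τ dout din T x ∧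
      ∀ (p : P) (θ : ℕ), 2 * Fintype.card P ≤ θ → x p θ = 0 :=
  stmt_7_general s t size hsize τ dout din hout0 hin0 T hex
end

section
/- Let a reallocation instance be given with the carry-in and warehouse constraints dropped (d⁻ ≡ ∞ and c ≡ ∞). For w ∈ W with P⁺(w) ≠ ∅, let B*(w) denote the minimum number of parts in a partition of P⁺(w) into parts each of total size at most d⁺(w) (assume such a partition exists). Then every schedule φ satisfying the carry-out constraint has completion time max_{p∈P}(φ(p) + τ(p)) ≥ B*(w) − 1 + min_{p∈P⁺(w)} τ(p) for every w ∈ W with P⁺(w) ≠ ∅. -/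
/-!
Every item leaving `w` starts by `M - m`, where `M` is the completion time and `m` the least
transit time out of `w`. Hence the carry-out constraint at `w` splits `P⁺(w)` into the at most
`M - m + 1` batches that leave at a common time step, and each batch fits into one bin.
-/

open Finset

lemma exists_packing_of_bounded_schedule {P : Type*} [Fintype P] (A : P → Prop)
    [DecidablePred A] (size : P → ℝ) (C : ℝ) (φ : P → ℕ) (T : ℕ)
    (hφ : ∀ p, A p → φ p ≤ T)
    (hload : ∀ θ : ℕ, ∑ p ∈ univ.filter (fun p => A p ∧ φ p = θ), size p ≤ C) :
    ∃ g : P → Fin (T + 1), ∀ i : Fin (T + 1),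
      ∑ p ∈ univ.filter (fun p => A p ∧ g p = i), size p ≤ C := by
  refine ⟨fun p => ⟨min (φ p) T, by omega⟩, fun i => (le_of_eq ?_).trans (hload i)⟩
  refine sum_congr (filter_congr fun p _ => and_congr_right fun hp => ?_) fun _ _ => rfl
  simp only [Fin.ext_iff, min_eq_left (hφ p hp)]

theorem stmt_9_general {P W : Type*} [Fintype P] [Nonempty P] [DecidableEq W]
    (s : P → W)
    (size : P → ℝ)
    (τ : P → ℕ)
    (dout : W → ℝ)
    (w : W) (hw : (univ.filter (fun p => s p = w)).Nonempty)
    (Bstar : ℕ)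
    (hBmin : ∀ n : ℕ,
      (∃ g : P → Fin n, ∀ i : Fin n,
        ∑ p ∈ univ.filter (fun p => s p = w ∧ g p = i), size p ≤ dout w) → Bstar ≤ n)
    (φ : P → ℕ)
    (hout : ∀ (w' : W) (θ : ℕ),
      ∑ p ∈ univ.filter (fun p => s p = w' ∧ φ p = θ), size p ≤ dout w') :
    Bstar - 1 + (univ.filter (fun p => s p = w)).inf' hw τ
      ≤ univ.sup' univ_nonempty (fun p => φ p + τ p) := by
  set M := univ.sup' univ_nonempty (fun p => φ p + τ p)
  set m := (univ.filter (fun p => s p = w)).inf' hw τ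
  have hbounds : ∀ p, s p = w → m ≤ τ p ∧ φ p + τ p ≤ M := fun p hp =>
    ⟨inf'_le τ (mem_filter.mpr ⟨mem_univ p, hp⟩), le_sup' (fun p => φ p + τ p) (mem_univ p)⟩
  have hstart : ∀ p, s p = w → φ p ≤ M - m := fun p hp => by
    have := hbounds p hp
    omega
  obtain ⟨p₀, hp₀⟩ := hw
  have hp₀M := hbounds p₀ (mem_filter.mp hp₀).2
  have hB := hBmin _ (exists_packing_of_bounded_schedule _ size _ φ _ hstart (hout w))
  omega

/-- bin-packing lower bound. If `B*` is the bin-packing optimum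
for the items `P⁺(w)` with bin capacity `d⁺(w)`, then every carry-out-feasible
schedule has completion time at least `B* - 1 + min_{p ∈ P⁺(w)} τ(p)`. -/
theorem stmt_9 {P W : Type*} [Fintype P] [Nonempty P] [Fintype W] [DecidableEq W]
    (s t : P → W) (hst : ∀ p, s p ≠ t p)
    (size : P → ℝ) (hsize : ∀ p, 0 ≤ size p)
    (τ : P → ℕ) (hτ : ∀ p, 1 ≤ τ p)
    (dout : W → ℝ)
    (w : W) (hw : (univ.filter (fun p => s p = w)).Nonempty)
    (Bstar : ℕ)
    (hBex : ∃ g : P → Fin Bstar, ∀ i : Fin Bstar,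
      ∑ p ∈ univ.filter (fun p => s p = w ∧ g p = i), size p ≤ dout w)
    (hBmin : ∀ n : ℕ,
      (∃ g : P → Fin n, ∀ i : Fin n,
        ∑ p ∈ univ.filter (fun p => s p = w ∧ g p = i), size p ≤ dout w) → Bstar ≤ n)
    (φ : P → ℕ)
    (hout : ∀ (w' : W) (θ : ℕ),
      ∑ p ∈ univ.filter (fun p => s p = w' ∧ φ p = θ), size p ≤ dout w') :
    Bstar - 1 + (univ.filter (fun p => s p = w)).inf' hw τ
      ≤ univ.sup' univ_nonempty (fun p => φ p + τ p) :=
  stmt_9_general s size τ dout w hw Bstar hBmin φ hout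
end

section
/- Let m ≥ 1 and B ≥ 1 be integers and x : {1,…,3m} → ℝ with B/4 < x_i < B/2 for every i and ∑_{i=1}^{3m} x_i = m·B. Consider the reallocation instance with W = {w₁, w₂}; product set P = P₁ ∪ P₂ where P₁ = {p₁,…,p_{3m}} with s(p_i) = w₁, t(p_i) = w₂, size(p_i) = x_i, and P₂ consists of m products p with s(p) = w₂, t(p) = w₁, size(p) = B; τ(p) = 1 for all p ∈ P; d⁺(w₁) = d⁺(w₂) = B; c(w₁) = c(w₂) = m·B; and the carry-in constraint dropped (d⁻ ≡ ∞). Then a feasible schedule (satisfying the carry-out and warehouse constraints) exists if and only if {1,…,3m} can be partitioned into m sets X₁,…,X_m with ∑_{i∈X_j} x_i = B for every j ∈ {1,…,m}. -/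
open Finset

/-- Products of the 3-Partition reduction instance: `3m` small products
(moved from `w₁ = true` to `w₂ = false`) and `m` big products
(moved from `w₂ = false` to `w₁ = true`). -/
abbrev ThreePartProd (m : ℕ) := Fin (3 * m) ⊕ Fin m

/-- Source warehouse of each product. -/
def srcW (m : ℕ) : ThreePartProd m → Bool := Sum.elim (fun _ => true) (fun _ => false)

/-- Destination warehouse of each product. -/
def tgtW (m : ℕ) : ThreePartProd m → Bool := Sum.elim (fun _ => false) (fun _ => true)

/-- Size of each product: `x i` for the small products, `B` for the big ones. -/
noncomputable def szW (m B : ℕ) (x : Fin (3 * m) → ℝ) : ThreePartProd m → ℝ :=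
  Sum.elim x (fun _ => (B : ℝ))

/-! Adding the two warehouse constraints at time `θ` gives a total load of `2mB = c(w₁) + c(w₂)`,
so both are tight: the small products shipped before `θ` weigh exactly `B` times the number of
big products shipped before `θ`. Differencing in `θ`, the small products shipped at time `θ` weigh
`B` times the number of big products shipped at `θ`, and the carry-out capacity of `w₂` allows at
most one of those. As every `x i` is positive, each small product shares its shipping time with
exactly one big product, and grouping by that product is the partition. Conversely, shipping the
`j`-th triple together with the `j`-th big product at time `j` is feasible. -/

section Loads

variable {ι κ : Type*} [Fintype ι] [Fintype κ]

lemma sum_filter_lt_add_one {M : Type*} [AddCommMonoid M] (g : ι → ℕ) (v : ι → M) (θ : ℕ) :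
    ∑ i with g i < θ + 1, v i = ∑ i with g i < θ, v i + ∑ i with g i = θ, v i := by
  simp only [sum_filter, ← sum_add_distrib]
  refine sum_congr rfl fun i _ => ?_
  rcases lt_trichotomy (g i) θ with h | rfl | h
  · simp [h, h.ne, Nat.lt_add_one_of_lt h]
  · simp
  · simp [h.ne', not_lt_of_gt h, not_le_of_gt h]

lemma sum_filter_le_add_sum_filter_lt {M : Type*} [AddCommMonoid M] (g : ι → ℕ) (v : ι → M)
    (θ : ℕ) : ∑ i with θ ≤ g i, v i + ∑ i with g i < θ, v i = ∑ i, v i := by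
  simpa only [not_le] using sum_filter_add_sum_filter_not univ (fun i => θ ≤ g i) v

variable {x : ι → ℝ} {y : κ → ℝ} {a : ι → ℕ} {b : κ → ℕ} {C : ℝ}

lemma sum_filter_lt_eq_of_warehouse (hx : ∑ i, x i = C) (hy : ∑ j, y j = C)
    (h₁ : ∀ θ, ∑ i with θ ≤ a i, x i + ∑ j with b j < θ, y j ≤ C)
    (h₂ : ∀ θ, ∑ j with θ ≤ b j, y j + ∑ i with a i < θ, x i ≤ C) (θ : ℕ) :
    ∑ i with a i < θ, x i = ∑ j with b j < θ, y j := by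
  linarith [h₁ θ, h₂ θ, sum_filter_le_add_sum_filter_lt a x θ,
    sum_filter_le_add_sum_filter_lt b y θ]

lemma sum_filter_eq_eq_of_warehouse (hx : ∑ i, x i = C) (hy : ∑ j, y j = C)
    (h₁ : ∀ θ, ∑ i with θ ≤ a i, x i + ∑ j with b j < θ, y j ≤ C)
    (h₂ : ∀ θ, ∑ j with θ ≤ b j, y j + ∑ i with a i < θ, x i ≤ C) (θ : ℕ) :
    ∑ i with a i = θ, x i = ∑ j with b j = θ, y j := by
  have h := sum_filter_lt_eq_of_warehouse hx hy h₁ h₂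
  have hsucc := h (θ + 1)
  rw [sum_filter_lt_add_one, sum_filter_lt_add_one, h θ] at hsucc
  exact add_left_cancel hsucc

end Loads

lemma card_le_one_of_sum_const_le {α : Type*} {s : Finset α} {B : ℝ} (hB : 0 < B)
    (h : ∑ _j ∈ s, B ≤ B) : s.card ≤ 1 := by
  rw [sum_const, nsmul_eq_mul] at h
  exact_mod_cast (mul_le_iff_le_one_left hB).mp h

section Partition

variable {ι κ : Type*} [Fintype ι] [Fintype κ] [DecidableEq κ] {x : ι → ℝ} {B : ℝ}

lemma exists_fiber_sums_eq_of_sum_filter_eq {a : ι → ℕ} {b : κ → ℕ} (hB : 0 < B)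
    (hx : ∀ i, 0 < x i) (hco : ∀ θ, ∑ j with b j = θ, B ≤ B)
    (hbal : ∀ θ, ∑ i with a i = θ, x i = ∑ j with b j = θ, B) :
    ∃ f : ι → κ, ∀ j, ∑ i with f i = j, x i = B := by
  have hb_unique : ∀ j j', b j = b j' → j = j' := fun j j' h =>
    card_le_one.mp (card_le_one_of_sum_const_le hB (hco (b j'))) j (by simp [h]) j' (by simp)
  have hb_hit : ∀ i, ∃ j, b j = a i := by
    intro i
    by_contra! hmiss
    have hpos : 0 < ∑ i' with a i' = a i, x i' :=
      sum_pos (fun i' _ => hx i') ⟨i, by simp⟩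
    rw [hbal, filter_false_of_mem (fun j _ => hmiss j), sum_empty] at hpos
    exact hpos.false
  choose f hf using hb_hit
  refine ⟨f, fun j => ?_⟩
  have hfiber : univ.filter (fun i => f i = j) = univ.filter (fun i => a i = b j) := by
    ext i
    simp only [mem_filter, mem_univ, true_and]
    exact ⟨fun h => h ▸ (hf i).symm, fun h => hb_unique _ _ ((hf i).trans h)⟩
  have hsingle : univ.filter (fun j' => b j' = b j) = {j} := by
    ext j'
    simp only [mem_filter, mem_univ, true_and, mem_singleton]
    exact ⟨hb_unique j' j, fun h => h ▸ rfl⟩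
  rw [hfiber, hbal, hsingle, sum_singleton]

lemma sum_filter_comp_eq_of_fiber_sums {f : ι → κ} (hf : ∀ j, ∑ i with f i = j, x i = B)
    (q : κ → Prop) [DecidablePred q] :
    ∑ i with q (f i), x i = ∑ j with q j, B := by
  rw [← sum_fiberwise_of_maps_to (t := univ.filter q) (g := f) (fun i hi => by simpa using hi)]
  refine sum_congr rfl fun j hj => ?_
  rw [← hf j, filter_filter]
  refine sum_congr (filter_congr fun i _ => ?_) fun _ _ => rfl
  exact ⟨And.right, fun h => ⟨h ▸ (mem_filter.mp hj).2, h⟩⟩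

end Partition

lemma sum_filter_val_eq_const_le {m : ℕ} {B : ℝ} (hB : 0 ≤ B) (θ : ℕ) :
    ∑ _j ∈ univ.filter (fun j : Fin m => (j : ℕ) = θ), B ≤ B := by
  have hcard : (univ.filter (fun j : Fin m => (j : ℕ) = θ)).card ≤ 1 :=
    card_le_one.mpr fun j hj j' hj' =>
      Fin.ext ((mem_filter.mp hj).2.trans (mem_filter.mp hj').2.symm)
  rw [sum_const, nsmul_eq_mul]
  exact mul_le_of_le_one_left hB (by exact_mod_cast hcard)

section Instance

variable {m B : ℕ} {x : Fin (3 * m) → ℝ} (Q : ThreePartProd m → Prop) [DecidablePred Q]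

lemma sum_srcW_true :
    ∑ p ∈ univ.filter (fun p => srcW m p = true ∧ Q p), szW m B x p =
      ∑ i with Q (.inl i), x i := by
  rw [sum_filter, sum_filter, Fintype.sum_sum_type]
  simp [srcW, szW]

lemma sum_srcW_false :
    ∑ p ∈ univ.filter (fun p => srcW m p = false ∧ Q p), szW m B x p =
      ∑ j with Q (.inr j), (B : ℝ) := by
  rw [sum_filter, sum_filter, Fintype.sum_sum_type]
  simp [srcW, szW]

lemma sum_tgtW_true :
    ∑ p ∈ univ.filter (fun p => tgtW m p = true ∧ Q p), szW m B x p =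
      ∑ j with Q (.inr j), (B : ℝ) := by
  rw [sum_filter, sum_filter, Fintype.sum_sum_type]
  simp [tgtW, szW]

lemma sum_tgtW_false :
    ∑ p ∈ univ.filter (fun p => tgtW m p = false ∧ Q p), szW m B x p =
      ∑ i with Q (.inl i), x i := by
  rw [sum_filter, sum_filter, Fintype.sum_sum_type]
  simp [tgtW, szW]

end Instance

theorem stmt_10_general (m B : ℕ) (hB : 1 ≤ B)
    (x : Fin (3 * m) → ℝ)
    (hx : ∀ i, (B : ℝ) / 4 < x i ∧ x i < (B : ℝ) / 2)
    (hsum : ∑ i, x i = (m : ℝ) * B) :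
    (∃ φ : ThreePartProd m → ℕ,
      (∀ (w : Bool) (θ : ℕ),
        ∑ p ∈ univ.filter (fun p => srcW m p = w ∧ φ p = θ), szW m B x p ≤ (B : ℝ)) ∧
      (∀ (w : Bool) (θ : ℕ),
        (∑ p ∈ univ.filter (fun p => srcW m p = w ∧ θ ≤ φ p), szW m B x p)
          + ∑ p ∈ univ.filter (fun p => tgtW m p = w ∧ φ p + 1 ≤ θ), szW m B x p
          ≤ (m : ℝ) * B))
    ↔ ∃ f : Fin (3 * m) → Fin m, ∀ j : Fin m,
        ∑ i ∈ univ.filter (fun i => f i = j), x i = (B : ℝ) := by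
  have hB₀ : (0 : ℝ) < B := by exact_mod_cast hB
  have hbig : ∑ _j : Fin m, (B : ℝ) = m * B := by simp
  constructor
  · rintro ⟨φ, hco, hwh⟩
    refine exists_fiber_sums_eq_of_sum_filter_eq
      (a := fun i => φ (.inl i)) (b := fun j => φ (.inr j))
      hB₀ (fun i => (by positivity : (0 : ℝ) ≤ B / 4).trans_lt (hx i).1)
      (fun θ => by simpa only [sum_srcW_false] using hco false θ)
      (sum_filter_eq_eq_of_warehouse (y := fun _ => (B : ℝ)) hsum hbig (fun θ => ?_) (fun θ => ?_))
    · simpa only [sum_srcW_true, sum_tgtW_true, Nat.add_one_le_iff] using hwh true θ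
    · simpa only [sum_srcW_false, sum_tgtW_false, Nat.add_one_le_iff] using hwh false θ
  · rintro ⟨f, hf⟩
    have hsmall := sum_filter_comp_eq_of_fiber_sums hf
    refine ⟨Sum.elim (fun i => (f i : ℕ)) (fun j => j), fun w θ => ?_, fun w θ => le_of_eq ?_⟩ <;>
      cases w
    · rw [sum_srcW_false]
      exact sum_filter_val_eq_const_le hB₀.le θ
    · rw [sum_srcW_true]
      exact (hsmall (fun j => (j : ℕ) = θ)).trans_le (sum_filter_val_eq_const_le hB₀.le θ)
    · rw [sum_srcW_false, sum_tgtW_false, ← hbig]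
      exact (congrArg _ (hsmall (fun j => (j : ℕ) < θ))).trans
        (sum_filter_le_add_sum_filter_lt _ _ θ)
    · rw [sum_srcW_true, sum_tgtW_true, ← hbig]
      exact (congrArg (· + _) (hsmall (fun j => θ ≤ (j : ℕ)))).trans
        (sum_filter_le_add_sum_filter_lt _ _ θ)

/-- correctness of the 3-Partition reduction, feasibility version.
With `τ ≡ 1`, `d⁺ ≡ B`, `c ≡ m·B` and the carry-in constraint dropped, a feasible
schedule exists iff the `x i` can be partitioned into `m` triples of sum `B`. -/
theorem stmt_10 (m B : ℕ) (hm : 1 ≤ m) (hB : 1 ≤ B)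
    (x : Fin (3 * m) → ℝ)
    (hx : ∀ i, (B : ℝ) / 4 < x i ∧ x i < (B : ℝ) / 2)
    (hsum : ∑ i, x i = (m : ℝ) * B) :
    (∃ φ : ThreePartProd m → ℕ,
      (∀ (w : Bool) (θ : ℕ),
        ∑ p ∈ univ.filter (fun p => srcW m p = w ∧ φ p = θ), szW m B x p ≤ (B : ℝ)) ∧
      (∀ (w : Bool) (θ : ℕ),
        (∑ p ∈ univ.filter (fun p => srcW m p = w ∧ θ ≤ φ p), szW m B x p)
          + ∑ p ∈ univ.filter (fun p => tgtW m p = w ∧ φ p + 1 ≤ θ), szW m B x p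
          ≤ (m : ℝ) * B))
    ↔ ∃ f : Fin (3 * m) → Fin m, ∀ j : Fin m,
        ∑ i ∈ univ.filter (fun i => f i = j), x i = (B : ℝ) :=
  stmt_10_general m B hB x hx hsum
end

section
/- Let m ≥ 1 and B ≥ 1 be integers and x : {1,…,3m} → ℝ with B/4 < x_i < B/2 for every i and ∑_{i=1}^{3m} x_i = m·B. Consider the reallocation instance with W = {w₁, w₂}; product set P = P₁ ∪ P₂ where P₁ = {p₁,…,p_{3m}} with s(p_i) = w₁, t(p_i) = w₂, size(p_i) = x_i, and P₂ consists of m products p with s(p) = w₂, t(p) = w₁, size(p) = B; τ(p) = 1 for all p ∈ P; d⁺(w₁) = d⁺(w₂) = B; and the carry-in and warehouse constraints dropped (d⁻ ≡ ∞ and c ≡ ∞). Then there exists a schedule satisfying the carry-out constraint with completion time at most m if and only if {1,…,3m} can be partitioned into m sets X₁,…,X_m with ∑_{i∈X_j} x_i = B for every j ∈ {1,…,m}. -/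
open Finset

/-!
A schedule of makespan at most `m` uses only the time slots `0, …, m - 1`, and in each slot
at most `B` worth of small products leaves `w₁`. Since the small products have total size
`m B`, every slot carries exactly `B`, so the slots form the required partition. Conversely,
a partition `X₀, …, X_{m-1}` is scheduled by sending `X_j` and the `j`-th big product at
time `j`.
-/

section FiberSums

variable {ι : Type*} [Fintype ι]

theorem sum_filter_eq_of_forall_le_of_sum_eq {κ : Type*} [Fintype κ] [DecidableEq κ]
    (f : ι → κ) {x : ι → ℝ} {c : ℝ}
    (hle : ∀ j, ∑ i ∈ univ.filter (fun i => f i = j), x i ≤ c)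
    (hsum : ∑ i, x i = Fintype.card κ * c) (j : κ) :
    ∑ i ∈ univ.filter (fun i => f i = j), x i = c := by
  have hfibers : ∑ j, ∑ i ∈ univ.filter (fun i => f i = j), x i = ∑ _j : κ, c := by
    rw [sum_fiberwise, hsum, sum_const, card_univ, nsmul_eq_mul]
  exact (sum_eq_sum_iff_of_le fun j _ => hle j).mp hfibers j (mem_univ j)

theorem sum_filter_val_eq_le {m : ℕ} (f : ι → Fin m) {x : ι → ℝ} {c : ℝ} (hc : 0 ≤ c)
    (hle : ∀ j, ∑ i ∈ univ.filter (fun i => f i = j), x i ≤ c) (θ : ℕ) :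
    ∑ i ∈ univ.filter (fun i => (f i : ℕ) = θ), x i ≤ c := by
  by_cases hθ : θ < m
  · simpa [Fin.ext_iff] using hle ⟨θ, hθ⟩
  · rw [filter_false_of_mem fun i _ (h : (f i : ℕ) = θ) => hθ (h ▸ (f i).isLt), sum_empty]
    exact hc

end FiberSums

theorem sup_add_one_le_iff {α : Type*} [Fintype α] (φ : α → ℕ) (m : ℕ) :
    univ.sup (fun p => φ p + 1) ≤ m ↔ ∀ p, φ p < m := by
  simp [Finset.sup_le_iff]

section CarryOut

variable {m : ℕ} (B : ℕ) (x : Fin (3 * m) → ℝ) (φ : ThreePartProd m → ℕ) (θ : ℕ)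

theorem sum_carryOut_true :
    ∑ p ∈ univ.filter (fun p => srcW m p = true ∧ φ p = θ), szW m B x p
      = ∑ i ∈ univ.filter (fun i => φ (Sum.inl i) = θ), x i := by
  rw [sum_filter, sum_filter, Fintype.sum_sum_type]
  simp [srcW, szW]

theorem sum_carryOut_false :
    ∑ p ∈ univ.filter (fun p => srcW m p = false ∧ φ p = θ), szW m B x p
      = ∑ _k ∈ univ.filter (fun k => φ (Sum.inr k) = θ), (B : ℝ) := by
  rw [sum_filter, sum_filter, Fintype.sum_sum_type]
  simp [srcW, szW]

end CarryOut

theorem stmt_11_general (m B : ℕ)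
    (x : Fin (3 * m) → ℝ)
    (hsum : ∑ i, x i = (m : ℝ) * B) :
    (∃ φ : ThreePartProd m → ℕ,
      (∀ (w : Bool) (θ : ℕ),
        ∑ p ∈ univ.filter (fun p => srcW m p = w ∧ φ p = θ), szW m B x p ≤ (B : ℝ)) ∧
      univ.sup (fun p : ThreePartProd m => φ p + 1) ≤ m)
    ↔ ∃ f : Fin (3 * m) → Fin m, ∀ j : Fin m,
        ∑ i ∈ univ.filter (fun i => f i = j), x i = (B : ℝ) := by
  simp only [sup_add_one_le_iff]
  constructor
  · rintro ⟨φ, hcarry, hφ⟩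
    refine ⟨fun i => ⟨φ (Sum.inl i), hφ _⟩,
      sum_filter_eq_of_forall_le_of_sum_eq _ (fun j => ?_) (by rwa [Fintype.card_fin])⟩
    simpa [Fin.ext_iff, sum_carryOut_true] using hcarry true j
  · rintro ⟨f, hf⟩
    refine ⟨Sum.elim (fun i => f i) (fun k => k), ?_, ?_⟩
    · rintro (_ | _) θ
      · rw [sum_carryOut_false]
        exact sum_filter_val_eq_le id B.cast_nonneg (fun j => by simp [filter_eq']) θ
      · rw [sum_carryOut_true]
        exact sum_filter_val_eq_le f B.cast_nonneg (fun j => (hf j).le) θ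
    · rintro (_ | _) <;> simp

/-- correctness of the 3-Partition reduction, optimization version.
With `τ ≡ 1`, `d⁺ ≡ B`, and the carry-in and warehouse constraints dropped, a
carry-out-feasible schedule with completion time at most `m` exists iff the
`x i` can be partitioned into `m` triples of sum `B`. -/
theorem stmt_11 (m B : ℕ) (hm : 1 ≤ m) (hB : 1 ≤ B)
    (x : Fin (3 * m) → ℝ)
    (hx : ∀ i, (B : ℝ) / 4 < x i ∧ x i < (B : ℝ) / 2)
    (hsum : ∑ i, x i = (m : ℝ) * B) :
    (∃ φ : ThreePartProd m → ℕ,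
      (∀ (w : Bool) (θ : ℕ),
        ∑ p ∈ univ.filter (fun p => srcW m p = w ∧ φ p = θ), szW m B x p ≤ (B : ℝ)) ∧
      univ.sup (fun p : ThreePartProd m => φ p + 1) ≤ m)
    ↔ ∃ f : Fin (3 * m) → Fin m, ∀ j : Fin m,
        ∑ i ∈ univ.filter (fun i => f i = j), x i = (B : ℝ) :=
  stmt_11_general m B x hsum
end

section
/- Let J be a finite nonempty set of jobs, ℓ : J → ℕ a delay function, and T ≥ 1 an integer. Consider the reallocation instance with W = {w₁, w₂}; P = J with s(j) = w₁, t(j) = w₂, size(j) = 1, and τ(j) = ℓ(j) + 1 for every j ∈ J; d⁺(w₁) = d⁺(w₂) = d⁻(w₁) = d⁻(w₂) = 1; and the warehouse constraint dropped (c ≡ ∞). Then the following are equivalent: (1) there exists a map φ' : J → ℕ such that φ' is injective, the map j ↦ φ'(j) + ℓ(j) is injective, and φ'(j) + ℓ(j) + 2 ≤ T for every j ∈ J (i.e., a two-machine flowshop schedule with unit processing times, delays ℓ(j), and completion time at most T); (2) there exists a schedule for the reallocation instance satisfying the carry-out and carry-in constraints with completion time at most T − 1. -/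
/-!
With unit sizes and unit capacities, the carry-out constraint at `w₁` says exactly that `φ` is
injective and the carry-in constraint at `w₂` that `j ↦ φ j + ℓ j + 1` is injective; the other
two constraints are vacuous. So the flowshop schedules are precisely the reallocation
schedules, `φ' = φ`, and the completion times differ by one.
-/

open Finset

section UnitCapacity

variable {α β γ : Type*} [Fintype α] [DecidableEq β]

theorem card_filter_eq_le_one_iff_injective (f : α → β) :
    (∀ b, #{a | f a = b} ≤ 1) ↔ Function.Injective f := by
  refine ⟨fun h a a' hf => ?_, fun hf b => card_le_one.mpr fun a ha a' ha' => ?_⟩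
  · exact card_le_one.mp (h (f a')) a (by simpa using hf) a' (by simp)
  · simp only [mem_filter, mem_univ, true_and] at ha ha'
    exact hf (ha.trans ha'.symm)

theorem unit_capacity_iff_injective [DecidableEq γ] (w₀ : γ) (f : α → β) :
    (∀ (w : γ) (b : β), ∑ _a ∈ {a | w₀ = w ∧ f a = b}, (1 : ℝ) ≤ 1) ↔
      Function.Injective f := by
  rw [← card_filter_eq_le_one_iff_injective]
  refine ⟨fun h b => by simpa using h w₀ b, fun h w b => ?_⟩
  by_cases hw : w₀ = w
  · simpa [hw] using h b
  · simp [hw]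

end UnitCapacity

theorem injective_add_succ_iff {α : Type*} (g h : α → ℕ) :
    Function.Injective (fun a => g a + (h a + 1)) ↔ Function.Injective (fun a => g a + h a) := by
  simp only [← add_assoc]
  exact (add_left_injective 1).of_comp_iff _

/-- The warehouses are `w₁ = true` and `w₂ = false`. -/
theorem stmt_12_general {J : Type*} [Fintype J] [Nonempty J]
    (ℓ : J → ℕ) (T : ℕ) :
    (∃ φ' : J → ℕ, Function.Injective φ' ∧
        Function.Injective (fun j => φ' j + ℓ j) ∧
        ∀ j, φ' j + ℓ j + 2 ≤ T)
    ↔ (∃ φ : J → ℕ,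
        (∀ (w : Bool) (θ : ℕ),
          ∑ j ∈ univ.filter (fun j : J => (true : Bool) = w ∧ φ j = θ), (1 : ℝ) ≤ 1) ∧
        (∀ (w : Bool) (θ : ℕ),
          ∑ j ∈ univ.filter (fun j : J => (false : Bool) = w ∧ φ j + (ℓ j + 1) = θ),
            (1 : ℝ) ≤ 1) ∧
        univ.sup' univ_nonempty (fun j => φ j + (ℓ j + 1)) ≤ T - 1) := by
  refine exists_congr fun φ => and_congr (unit_capacity_iff_injective true φ).symm
    (and_congr ((unit_capacity_iff_injective false _).trans (injective_add_succ_iff φ ℓ)).symm ?_)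
  simp only [sup'_le_iff, mem_univ, true_implies]
  exact forall_congr' fun j => by omega

/-- correctness of the reduction from two-machine flowshop with
delays (unit processing times). `w₁ = true`, `w₂ = false`, `s ≡ w₁`, `t ≡ w₂`,
`size ≡ 1`, `τ(j) = ℓ(j) + 1`, all carry-out/in capacities equal to `1`, and the
warehouse constraint dropped. -/
theorem stmt_12 {J : Type*} [Fintype J] [Nonempty J]
    (ℓ : J → ℕ) (T : ℕ) (hT : 1 ≤ T) :
    (∃ φ' : J → ℕ, Function.Injective φ' ∧
        Function.Injective (fun j => φ' j + ℓ j) ∧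
        ∀ j, φ' j + ℓ j + 2 ≤ T)
    ↔ (∃ φ : J → ℕ,
        (∀ (w : Bool) (θ : ℕ),
          ∑ j ∈ univ.filter (fun j : J => (true : Bool) = w ∧ φ j = θ), (1 : ℝ) ≤ 1) ∧
        (∀ (w : Bool) (θ : ℕ),
          ∑ j ∈ univ.filter (fun j : J => (false : Bool) = w ∧ φ j + (ℓ j + 1) = θ),
            (1 : ℝ) ≤ 1) ∧
        univ.sup' univ_nonempty (fun j => φ j + (ℓ j + 1)) ≤ T - 1) :=
  stmt_12_general ℓ T
end

section
/- Let (E, A, B, a, b) be a bipartite multigraph and w : E → ℝ a weight function. Suppose Q ⊆ E satisfies: (1) for every u ∈ A with {e ∈ E : a(e) = u} ≠ ∅ there exists e ∈ Q with a(e) = u and w(e) = max{w(e') : e' ∈ E, a(e') = u}, and for every v ∈ B with {e ∈ E : b(e) = v} ≠ ∅ there exists e ∈ Q with b(e) = v and w(e) = max{w(e') : e' ∈ E, b(e') = v}; and (2) no proper subset of Q satisfies (1). Then Q is acyclic. -/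
/-! Take an edge `e` of minimum weight in a nonempty `S ⊆ Q`. If `S` had no edge that is alone in
`S` at one of its endpoints, each endpoint of `e` would carry a second edge of `S`, of weight at
least `w e`; that edge takes over from `e` wherever `e` was the maximum-weight edge, so `Q.erase e`
still satisfies (1), contradicting the minimality of `Q`. -/

open Finset

/-- `MaxCover a b w Q` says that for every vertex of the bipartite multigraph
incident to at least one edge, `Q` contains an edge incident to that vertex of
maximum weight among all edges incident to it. -/
def MaxCover {E A B : Type*} (a : E → A) (b : E → B) (w : E → ℝ) (Q : Finset E) : Prop :=
  (∀ u : A, (∃ e : E, a e = u) →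
    ∃ e ∈ Q, a e = u ∧ ∀ e' : E, a e' = u → w e' ≤ w e) ∧
  (∀ v : B, (∃ e : E, b e = v) →
    ∃ e ∈ Q, b e = v ∧ ∀ e' : E, b e' = v → w e' ≤ w e)

section

variable {E V : Type*} [DecidableEq E] {f : E → V} {w : E → ℝ} {Q : Finset E} {e e' : E}

theorem exists_max_mem_erase
    (hQ : ∀ v : V, (∃ x, f x = v) → ∃ x ∈ Q, f x = v ∧ ∀ y, f y = v → w y ≤ w x)
    (he'Q : e' ∈ Q) (he'e : e' ≠ e) (hf : f e' = f e) (hw : w e ≤ w e') :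
    ∀ v : V, (∃ x, f x = v) → ∃ x ∈ Q.erase e, f x = v ∧ ∀ y, f y = v → w y ≤ w x := by
  intro v hv
  obtain ⟨x, hxQ, hxv, hxmax⟩ := hQ v hv
  by_cases hxe : x = e
  · subst hxe
    exact ⟨e', mem_erase.2 ⟨he'e, he'Q⟩, hf.trans hxv, fun y hy => (hxmax y hy).trans hw⟩
  · exact ⟨x, mem_erase.2 ⟨hxe, hxQ⟩, hxv, hxmax⟩

end

theorem MaxCover.erase {E A B : Type*} [DecidableEq E] {a : E → A} {b : E → B} {w : E → ℝ}
    {Q : Finset E} (hQ : MaxCover a b w Q) {e ea eb : E}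
    (heaQ : ea ∈ Q) (hea : ea ≠ e) (ha : a ea = a e) (hwa : w e ≤ w ea)
    (hebQ : eb ∈ Q) (heb : eb ≠ e) (hb : b eb = b e) (hwb : w e ≤ w eb) :
    MaxCover a b w (Q.erase e) :=
  ⟨exists_max_mem_erase hQ.1 heaQ hea ha hwa, exists_max_mem_erase hQ.2 hebQ heb hb hwb⟩

theorem stmt_13_general {E A B : Type*}
    (a : E → A) (b : E → B) (w : E → ℝ) (Q : Finset E)
    (hQ : MaxCover a b w Q)
    (hmin : ∀ Q' : Finset E, Q' ⊂ Q → ¬ MaxCover a b w Q') :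
    ∀ S : Finset E, S ⊆ Q → S.Nonempty →
      ∃ e ∈ S, (∀ e' ∈ S, a e' = a e → e' = e) ∨ (∀ e' ∈ S, b e' = b e → e' = e) := by
  classical
  intro S hSQ hS
  obtain ⟨e, heS, hemin⟩ := S.exists_min_image w hS
  by_contra! hcycle
  obtain ⟨⟨ea, heaS, ha, hea⟩, ⟨eb, hebS, hb, heb⟩⟩ := hcycle e heS
  exact hmin (Q.erase e) (erase_ssubset (hSQ heS))
    (hQ.erase (hSQ heaS) hea ha (hemin ea heaS) (hSQ hebS) heb hb (hemin eb hebS))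

/-- a minimal set of per-vertex maximum-weight edges in a
bipartite multigraph is acyclic. -/
theorem stmt_13 {E A B : Type*} [Fintype E] [Fintype A] [Fintype B]
    (a : E → A) (b : E → B) (w : E → ℝ) (Q : Finset E)
    (hQ : MaxCover a b w Q)
    (hmin : ∀ Q' : Finset E, Q' ⊂ Q → ¬ MaxCover a b w Q') :
    ∀ S : Finset E, S ⊆ Q → S.Nonempty →
      ∃ e ∈ S, (∀ e' ∈ S, a e' = a e → e' = e) ∨ (∀ e' ∈ S, b e' = b e → e' = e) :=
  stmt_13_general a b w Q hQ hmin
end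

section
/- Let (E, A, B, a, b) be a bipartite multigraph whose edge set E is acyclic, let size : E → ℝ with size(e) ≥ 0 be a weight function, and let capA : A → ℝ and capB : B → ℝ be capacity functions. Suppose that for every u ∈ A the set {e ∈ E : a(e) = u} can be partitioned into three parts each of total weight at most capA(u), and for every v ∈ B the set {e ∈ E : b(e) = v} can be partitioned into three parts each of total weight at most capB(v). Then E can be partitioned into three sets E₁, E₂, E₃ such that for every i ∈ {1,2,3}, every u ∈ A satisfies ∑_{e∈E_i, a(e)=u} size(e) ≤ capA(u) and every v ∈ B satisfies ∑_{e∈E_i, b(e)=v} size(e) ≤ capB(v). -/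
/-!
Build the global colouring edge by edge, following the acyclicity order: remove an edge `e`
that is the only remaining edge at one of its endpoints `u`, colour the rest, and keep at every
vertex a feasible local colouring agreeing with the global one on the coloured edges there.
Colour `e` as the local colouring at its other endpoint prescribes; at `u` no other coloured
edge constrains the local colouring, so permuting its colours makes it agree on `e` too.
-/

open Finset Function

section LocallyExtendable

variable {E V K : Type*} {p : E → V} {P : V → (E → K) → Prop} {S : Finset E} {g : E → K}

def LocallyExtendable (p : E → V) (P : V → (E → K) → Prop) (S : Finset E) (g : E → K) :
    Prop :=
  ∀ u, ∃ h, P u h ∧ Set.EqOn h g {e | e ∈ S ∧ p e = u}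

lemma locallyExtendable_empty (hP : ∀ u, ∃ h, P u h) (g : E → K) :
    LocallyExtendable p P ∅ g := fun u =>
  (hP u).imp fun _ hh => ⟨hh, fun _ he => absurd he.1 (notMem_empty _)⟩

variable [DecidableEq E] {e : E}

lemma LocallyExtendable.exists_update_at_ne (hg : LocallyExtendable p P (S.erase e) g) (c : K)
    {u : V} (hu : p e ≠ u) :
    ∃ h, P u h ∧ Set.EqOn h (update g e c) {e' | e' ∈ S ∧ p e' = u} := by
  obtain ⟨h, hP, hh⟩ := hg u
  refine ⟨h, hP, fun e' ⟨he'S, he'u⟩ => ?_⟩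
  have he' : e' ≠ e := by rintro rfl; exact hu he'u
  rw [update_of_ne he']
  exact hh ⟨mem_erase.2 ⟨he', he'S⟩, he'u⟩

lemma LocallyExtendable.exists_update (hg : LocallyExtendable p P (S.erase e) g) :
    ∃ c, LocallyExtendable p P S (update g e c) := by
  obtain ⟨h, hP, hh⟩ := hg (p e)
  refine ⟨h e, fun u => ?_⟩
  by_cases hu : p e = u
  · subst hu
    refine ⟨h, hP, fun e' ⟨he'S, he'u⟩ => ?_⟩
    by_cases he' : e' = e
    · subst he'
      rw [update_self]
    · rw [update_of_ne he']
      exact hh ⟨mem_erase.2 ⟨he', he'S⟩, he'u⟩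
  · exact hg.exists_update_at_ne _ hu

lemma LocallyExtendable.update_of_unique [DecidableEq K]
    (hperm : ∀ u h (σ : Equiv.Perm K), P u h → P u (σ ∘ h))
    (he : ∀ e' ∈ S, p e' = p e → e' = e) (hg : LocallyExtendable p P (S.erase e) g) (c : K) :
    LocallyExtendable p P S (update g e c) := by
  intro u
  by_cases hu : p e = u
  · subst hu
    obtain ⟨h, hP, -⟩ := hg (p e)
    refine ⟨Equiv.swap (h e) c ∘ h, hperm _ _ _ hP, fun e' ⟨he'S, he'u⟩ => ?_⟩
    obtain rfl := he e' he'S he'u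
    simp
  · exact hg.exists_update_at_ne c hu

end LocallyExtendable

section Acyclic

variable {E A B K : Type*} [DecidableEq E] [DecidableEq K] {a : E → A} {b : E → B}
  {PA : A → (E → K) → Prop} {PB : B → (E → K) → Prop}

lemma exists_locallyExtendable_of_erase_of_unique
    (hperm : ∀ u h (σ : Equiv.Perm K), PA u h → PA u (σ ∘ h))
    {S : Finset E} {e : E} (he : ∀ e' ∈ S, a e' = a e → e' = e) {g : E → K}
    (hgA : LocallyExtendable a PA (S.erase e) g) (hgB : LocallyExtendable b PB (S.erase e) g) :
    ∃ g', LocallyExtendable a PA S g' ∧ LocallyExtendable b PB S g' := by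
  obtain ⟨c, hc⟩ := hgB.exists_update
  exact ⟨_, hgA.update_of_unique hperm he c, hc⟩

theorem exists_locallyExtendable_of_acyclic
    (hPA : ∀ u, ∃ h, PA u h) (hPB : ∀ v, ∃ h, PB v h)
    (hpermA : ∀ u h (σ : Equiv.Perm K), PA u h → PA u (σ ∘ h))
    (hpermB : ∀ v h (σ : Equiv.Perm K), PB v h → PB v (σ ∘ h))
    (hacyc : ∀ S : Finset E, S.Nonempty →
      ∃ e ∈ S, (∀ e' ∈ S, a e' = a e → e' = e) ∨ (∀ e' ∈ S, b e' = b e → e' = e))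
    (S : Finset E) : ∃ g, LocallyExtendable a PA S g ∧ LocallyExtendable b PB S g := by
  induction S using Finset.strongInduction with
  | H S ih =>
    rcases S.eq_empty_or_nonempty with rfl | hS
    · let g : E → K := fun e => Classical.choose (hPA (a e)) e
      exact ⟨g, locallyExtendable_empty hPA g, locallyExtendable_empty hPB g⟩
    obtain ⟨e, heS, hua | hub⟩ := hacyc S hS <;>
      obtain ⟨g, hgA, hgB⟩ := ih _ (erase_ssubset heS)
    · exact exists_locallyExtendable_of_erase_of_unique hpermA hua hgA hgB
    · exact (exists_locallyExtendable_of_erase_of_unique hpermB hub hgB hgA).imp fun _ => And.symm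

end Acyclic

section ColorClassesBounded

variable {E V K M : Type*} [Fintype E] [DecidableEq V] [DecidableEq K]
  [AddCommMonoid M] [LE M]

def ColorClassesBounded (p : E → V) (size : E → M) (cap : V → M) (u : V) (h : E → K) :
    Prop :=
  ∀ i, ∑ e ∈ univ.filter (fun e => p e = u ∧ h e = i), size e ≤ cap u

variable {p : E → V} {size : E → M} {cap : V → M} {u : V} {h g : E → K}

lemma ColorClassesBounded.comp_perm (hh : ColorClassesBounded p size cap u h)
    (σ : Equiv.Perm K) : ColorClassesBounded p size cap u (σ ∘ h) := by
  intro i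
  convert hh (σ.symm i) using 3
  simp [Equiv.eq_symm_apply]

lemma ColorClassesBounded.congr (hh : ColorClassesBounded p size cap u h)
    (hhg : Set.EqOn h g {e | p e = u}) : ColorClassesBounded p size cap u g := by
  intro i
  convert hh i using 2
  ext e
  simp only [mem_filter, mem_univ, true_and, and_congr_right_iff]
  exact fun he => by rw [hhg he]

lemma LocallyExtendable.sum_filter_le
    (hg : LocallyExtendable p (ColorClassesBounded p size cap) univ g) (i : K) (u : V) :
    ∑ e ∈ univ.filter (fun e => g e = i ∧ p e = u), size e ≤ cap u := by
  obtain ⟨h, hh, hhg⟩ := hg u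
  simpa only [and_comm] using (hh.congr fun e he => hhg ⟨mem_univ e, he⟩) i

end ColorClassesBounded

theorem stmt_14_general {E A B : Type*} [Fintype E] [DecidableEq A] [DecidableEq B]
    (a : E → A) (b : E → B)
    (size : E → ℝ)
    (capA : A → ℝ) (capB : B → ℝ)
    (hacyc : ∀ S : Finset E, S.Nonempty →
      ∃ e ∈ S, (∀ e' ∈ S, a e' = a e → e' = e) ∨ (∀ e' ∈ S, b e' = b e → e' = e))
    (hA : ∀ u : A, ∃ g : E → Fin 3, ∀ i : Fin 3,
      ∑ e ∈ univ.filter (fun e => a e = u ∧ g e = i), size e ≤ capA u)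
    (hB : ∀ v : B, ∃ g : E → Fin 3, ∀ i : Fin 3,
      ∑ e ∈ univ.filter (fun e => b e = v ∧ g e = i), size e ≤ capB v) :
    ∃ g : E → Fin 3, ∀ i : Fin 3,
      (∀ u : A, ∑ e ∈ univ.filter (fun e => g e = i ∧ a e = u), size e ≤ capA u) ∧
      (∀ v : B, ∑ e ∈ univ.filter (fun e => g e = i ∧ b e = v), size e ≤ capB v) := by
  classical
  obtain ⟨g, hgA, hgB⟩ := exists_locallyExtendable_of_acyclic
    (PA := ColorClassesBounded a size capA) (PB := ColorClassesBounded b size capB)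
    hA hB (fun _ _ σ hh => hh.comp_perm σ) (fun _ _ σ hh => hh.comp_perm σ) hacyc univ
  exact ⟨g, fun i => ⟨fun u => hgA.sum_filter_le i u, fun v => hgB.sum_filter_le i v⟩⟩

/-- in an acyclic bipartite multigraph, if the edges at every
vertex can be locally partitioned into three parts respecting the vertex
capacity, then there is a single global partition into three parts respecting
all vertex capacities simultaneously. -/
theorem stmt_14 {E A B : Type*} [Fintype E] [DecidableEq A] [DecidableEq B]
    (a : E → A) (b : E → B)
    (size : E → ℝ) (hsize : ∀ e, 0 ≤ size e)
    (capA : A → ℝ) (capB : B → ℝ)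
    (hacyc : ∀ S : Finset E, S.Nonempty →
      ∃ e ∈ S, (∀ e' ∈ S, a e' = a e → e' = e) ∨ (∀ e' ∈ S, b e' = b e → e' = e))
    (hA : ∀ u : A, ∃ g : E → Fin 3, ∀ i : Fin 3,
      ∑ e ∈ univ.filter (fun e => a e = u ∧ g e = i), size e ≤ capA u)
    (hB : ∀ v : B, ∃ g : E → Fin 3, ∀ i : Fin 3,
      ∑ e ∈ univ.filter (fun e => b e = v ∧ g e = i), size e ≤ capB v) :
    ∃ g : E → Fin 3, ∀ i : Fin 3,
      (∀ u : A, ∑ e ∈ univ.filter (fun e => g e = i ∧ a e = u), size e ≤ capA u) ∧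
      (∀ v : B, ∑ e ∈ univ.filter (fun e => g e = i ∧ b e = v), size e ≤ capB v) :=
  stmt_14_general a b size capA capB hacyc hA hB
end

section
/- Let (E, A, B, a, b) be a bipartite multigraph and let dA : A → ℕ and dB : B → ℕ be capacity functions with dA(u) ≥ 1 for every u ∈ A and dB(v) ≥ 1 for every v ∈ B. Suppose that |{e ∈ E : a(e) = u}| ≤ dA(u) + 2 for every u ∈ A and |{e ∈ E : b(e) = v}| ≤ dB(v) + 2 for every v ∈ B. Then E can be partitioned into four sets E₁, E₂, E₃, E₄ such that for every i ∈ {1,2,3,4}, every u ∈ A satisfies |{e ∈ E_i : a(e) = u}| ≤ dA(u) and every v ∈ B satisfies |{e ∈ E_i : b(e) = v}| ≤ dB(v). -/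
/-!
View the bipartite multigraph as a multigraph on `A ⊕ B`. Every finite multigraph has an
orientation in which in- and out-degree differ by at most one at every vertex: split off two
edges `v x`, `v y` at a common vertex into one edge `x y`, orient inductively, and orient the
path `x v y` the same way; when no two edges meet, any orientation works. Colouring an edge by
its direction (from `A` to `B` or back) splits every degree `d` into parts of size at most
`⌈d/2⌉`. Doing this twice, the second time on the graph whose vertices also record the first
colour, yields four classes with degrees at most `⌈d/4⌉`, and `⌈(c + 2)/4⌉ ≤ c` for every
capacity `c ≥ 1`.
-/

open Finset

namespace Finset

variable {α : Type*} [DecidableEq α]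

theorem card_filter_eq_card_filter_erase_add {s : Finset α} {a : α} (ha : a ∈ s)
    (p : α → Prop) [DecidablePred p] :
    #{x ∈ s | p x} = #{x ∈ s.erase a | p x} + if p a then 1 else 0 := by
  rw [card_filter, card_filter, sum_erase_add _ _ ha]

theorem card_filter_update_eq {β : Type*} [DecidableEq β] {s : Finset α} {a : α} (ha : a ∈ s)
    (f : α → β) (b w : β) :
    #{x ∈ s | Function.update f a b x = w} =
      #{x ∈ s.erase a | f x = w} + if b = w then 1 else 0 := by
  rw [card_filter_eq_card_filter_erase_add ha, Function.update_self]
  congr 2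
  exact filter_congr fun x hx => by rw [Function.update_of_ne (ne_of_mem_erase hx)]

end Finset

section Orientation

variable {V E : Type*} [DecidableEq V]

def IsBalancedOrientation (ends : E → Sym2 V) (S : Finset E) (tail head : E → V) : Prop :=
  (∀ e ∈ S, s(tail e, head e) = ends e) ∧
    ∀ v, #{e ∈ S | tail e = v} ≤ #{e ∈ S | head e = v} + 1 ∧
      #{e ∈ S | head e = v} ≤ #{e ∈ S | tail e = v} + 1

namespace IsBalancedOrientation

variable {ends : E → Sym2 V} {S : Finset E} {tail head : E → V}

theorem swap (h : IsBalancedOrientation ends S tail head) :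
    IsBalancedOrientation ends S head tail :=
  ⟨fun e he => Sym2.eq_swap.trans (h.1 e he), fun v => (h.2 v).symm⟩

theorem of_subsingleton_incident
    (hS : ∀ v, ∀ e₁ ∈ S, ∀ e₂ ∈ S, v ∈ ends e₁ → v ∈ ends e₂ → e₁ = e₂)
    (ho : ∀ e ∈ S, s(tail e, head e) = ends e) : IsBalancedOrientation ends S tail head := by
  have hcard (end_ : E → V) (hend : ∀ e ∈ S, end_ e ∈ ends e) (v : V) :
      #{e ∈ S | end_ e = v} ≤ 1 :=
    card_le_one.mpr fun e₁ h₁ e₂ h₂ => by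
      rw [mem_filter] at h₁ h₂
      exact hS v e₁ h₁.1 e₂ h₂.1 (h₁.2 ▸ hend e₁ h₁.1) (h₂.2 ▸ hend e₂ h₂.1)
  have htail := hcard tail fun e he => ho e he ▸ Sym2.mem_mk_left _ _
  have hhead := hcard head fun e he => ho e he ▸ Sym2.mem_mk_right _ _
  exact ⟨ho, fun v => ⟨(htail v).trans (by omega), (hhead v).trans (by omega)⟩⟩

/-- Splitting off: orienting the path `x — v — y` like the edge `x → y` that replaced it adds
one outgoing and one incoming edge at `v` and changes nothing elsewhere. -/
theorem splitOff [DecidableEq E] {e₁ e₂ : E} {v x y : V}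
    (h₁ : e₁ ∈ S) (h₂ : e₂ ∈ S) (hne : e₁ ≠ e₂)
    (hends₁ : ends e₁ = s(v, x)) (hends₂ : ends e₂ = s(v, y))
    (h : IsBalancedOrientation (Function.update ends e₁ s(x, y)) (S.erase e₂) tail head)
    (htail : tail e₁ = x) (hhead : head e₁ = y) :
    IsBalancedOrientation ends S (Function.update tail e₂ v)
      (Function.update (Function.update head e₁ v) e₂ y) := by
  have h₁' : e₁ ∈ S.erase e₂ := mem_erase.mpr ⟨hne, h₁⟩
  refine ⟨fun e he => ?_, fun w => ?_⟩
  · by_cases he₂ : e = e₂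
    · subst he₂; simp [hends₂]
    by_cases he₁ : e = e₁
    · subst he₁; simp [he₂, htail, hends₁, Sym2.eq_swap]
    · simpa [he₁, he₂] using h.1 e (mem_erase.mpr ⟨he₂, he⟩)
  · have hout : #{e ∈ S | Function.update tail e₂ v e = w} =
        #{e ∈ S.erase e₂ | tail e = w} + if v = w then 1 else 0 :=
      card_filter_update_eq h₂ _ _ _
    have hin : #{e ∈ S | Function.update (Function.update head e₁ v) e₂ y e = w} =
        #{e ∈ S.erase e₂ | head e = w} + if v = w then 1 else 0 := by
      rw [card_filter_update_eq h₂, card_filter_update_eq h₁',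
        card_filter_eq_card_filter_erase_add h₁' (head · = w), hhead]
      omega
    have := h.2 w
    omega

end IsBalancedOrientation

theorem exists_isBalancedOrientation [DecidableEq E] (ends : E → Sym2 V) (S : Finset E) :
    ∃ tail head, IsBalancedOrientation ends S tail head := by
  induction S using Finset.strongInduction generalizing ends with
  | H S ih =>
  by_cases hsplit : ∃ v, ∃ e₁ ∈ S, ∃ e₂ ∈ S, e₁ ≠ e₂ ∧ v ∈ ends e₁ ∧ v ∈ ends e₂
  · obtain ⟨v, e₁, h₁, e₂, h₂, hne, hv₁, hv₂⟩ := hsplit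
    obtain ⟨x, hx⟩ := Sym2.mem_iff_exists.mp hv₁
    obtain ⟨y, hy⟩ := Sym2.mem_iff_exists.mp hv₂
    obtain ⟨tail, head, h⟩ := ih _ (erase_ssubset h₂) (Function.update ends e₁ s(x, y))
    have he₁ := h.1 e₁ (mem_erase.mpr ⟨hne, h₁⟩)
    rw [Function.update_self, Sym2.eq_iff] at he₁
    rcases he₁ with ⟨htail, hhead⟩ | ⟨htail, hhead⟩
    · exact ⟨_, _, h.splitOff h₁ h₂ hne hx hy htail hhead⟩
    · exact ⟨_, _, (h.swap.splitOff h₁ h₂ hne hx hy hhead htail).swap⟩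
  · have (e : E) : ∃ x y, s(x, y) = ends e := Sym2.inductionOn (ends e) fun x y => ⟨x, y, rfl⟩
    choose tail head ho using this
    refine ⟨tail, head, .of_subsingleton_incident (fun v e₁ h₁ e₂ h₂ hv₁ hv₂ => ?_) fun e _ => ho e⟩
    by_contra hne
    exact hsplit ⟨v, e₁, h₁, e₂, h₂, hne, hv₁, hv₂⟩

theorem IsBalancedOrientation.two_mul_card_filter_le [Fintype E] {ends : E → Sym2 V}
    {tail head : E → V} (h : IsBalancedOrientation ends univ tail head)
    {c : E → Bool} {P : E → Prop} [DecidablePred P] {w : V}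
    (htail : ∀ e, tail e = w ↔ c e = true ∧ P e) (hhead : ∀ e, head e = w ↔ c e = false ∧ P e)
    (β : Bool) : 2 * #{e | c e = β ∧ P e} ≤ #{e | P e} + 1 := by
  classical
  have hsum : #{e | c e = true ∧ P e} + #{e | c e = false ∧ P e} = #{e | P e} := by
    rw [← card_union_of_disjoint (disjoint_filter.mpr fun e _ h₁ h₂ => by simp_all)]
    congr 1
    ext e
    cases hc : c e <;> simp [hc]
  have hout : #{e | tail e = w} = #{e | c e = true ∧ P e} := by simp_rw [htail]
  have hin : #{e | head e = w} = #{e | c e = false ∧ P e} := by simp_rw [hhead]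
  have := h.2 w
  cases β <;> omega

end Orientation

section Bipartite

variable {E A B : Type*} [Fintype E] [DecidableEq A] [DecidableEq B]

def HalvesDegrees (c : E → Bool) (a : E → A) : Prop :=
  ∀ u β, 2 * #{e | c e = β ∧ a e = u} ≤ #{e | a e = u} + 1

theorem exists_halvesDegrees (a : E → A) (b : E → B) :
    ∃ c : E → Bool, HalvesDegrees c a ∧ HalvesDegrees c b := by
  classical
  obtain ⟨tail, head, h⟩ :=
    exists_isBalancedOrientation (fun e => s(Sum.inl (a e), Sum.inr (b e))) univ
  have hends (e : E) : tail e = .inl (a e) ∧ head e = .inr (b e) ∨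
      tail e = .inr (b e) ∧ head e = .inl (a e) :=
    Sym2.eq_iff.mp (h.1 e (mem_univ e))
  refine ⟨fun e => decide (tail e = .inl (a e)),
    fun u => h.two_mul_card_filter_le (w := .inl u) ?_ ?_,
    fun v => h.swap.two_mul_card_filter_le (w := .inr v) ?_ ?_⟩ <;>
  · intro e
    rcases hends e with ⟨ht, hh⟩ | ⟨ht, hh⟩ <;> simp [ht, hh]

theorem HalvesDegrees.four_mul_card_filter_le {a : E → A} {c₁ c₂ : E → Bool}
    (h₁ : HalvesDegrees c₁ a) (h₂ : HalvesDegrees c₂ fun e => (a e, c₁ e)) (u : A)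
    (i : Bool × Bool) : 4 * #{e | (c₁ e, c₂ e) = i ∧ a e = u} ≤ #{e | a e = u} + 3 := by
  have hi : #{e | (c₁ e, c₂ e) = i ∧ a e = u} = #{e | c₂ e = i.2 ∧ (a e, c₁ e) = (u, i.1)} := by
    congr 1
    ext e
    simp only [mem_filter, mem_univ, true_and, Prod.ext_iff]
    tauto
  have hu : #{e | (a e, c₁ e) = (u, i.1)} = #{e | c₁ e = i.1 ∧ a e = u} := by
    simp only [Prod.mk.injEq, and_comm]
  have := h₁ u i.1
  have := h₂ (u, i.1) i.2
  dsimp only at this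
  omega

end Bipartite

/-- if every vertex of a bipartite multigraph has degree at most
its (positive, integral) capacity plus two, then the edges can be partitioned
into four parts, each respecting all degree capacities. -/
theorem stmt_15 {E A B : Type*} [Fintype E] [DecidableEq A] [DecidableEq B]
    (a : E → A) (b : E → B)
    (dA : A → ℕ) (dB : B → ℕ)
    (hdA : ∀ u, 1 ≤ dA u) (hdB : ∀ v, 1 ≤ dB v)
    (hA : ∀ u : A, (univ.filter (fun e => a e = u)).card ≤ dA u + 2)
    (hB : ∀ v : B, (univ.filter (fun e => b e = v)).card ≤ dB v + 2) :
    ∃ g : E → Fin 4, ∀ i : Fin 4,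
      (∀ u : A, (univ.filter (fun e => g e = i ∧ a e = u)).card ≤ dA u) ∧
      (∀ v : B, (univ.filter (fun e => g e = i ∧ b e = v)).card ≤ dB v) := by
  obtain ⟨c₁, hA₁, hB₁⟩ := exists_halvesDegrees a b
  obtain ⟨c₂, hA₂, hB₂⟩ := exists_halvesDegrees (fun e => (a e, c₁ e)) (fun e => (b e, c₁ e))
  let σ : Bool × Bool ≃ Fin 4 := Fintype.equivFinOfCardEq rfl
  refine ⟨fun e => σ (c₁ e, c₂ e), fun i => ⟨fun u => ?_, fun v => ?_⟩⟩ <;>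
    simp_rw [← σ.eq_symm_apply]
  · have := hA₁.four_mul_card_filter_le hA₂ u (σ.symm i)
    have := hA u
    have := hdA u
    omega
  · have := hB₁.four_mul_card_filter_le hB₂ v (σ.symm i)
    have := hB v
    have := hdB v
    omega
end

section
/- Let (E, A, B, a, b) be a bipartite multigraph. Then E can be partitioned into two sets E₃ and E₄ such that every vertex of degree at least 2 is incident to at least one edge of E₃ and to at least one edge of E₄; that is, for every u ∈ A with |{e ∈ E : a(e) = u}| ≥ 2 both {e ∈ E₃ : a(e) = u} and {e ∈ E₄ : a(e) = u} are nonempty, and likewise for every v ∈ B with |{e ∈ E : b(e) = v}| ≥ 2. -/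
/-!
At every vertex of degree at least two pair off two of its edges. The pairs taken at the
vertices of `A` and those taken at the vertices of `B` form two matchings on the edge set `E`,
and a proper 2-colouring of their union gives the required partition. A union of two matchings
`M₁ ⊔ M₂` is bipartite: for an `M₁`-edge `e e'`, contract the path `f - e - e' - f'` (whose outer
edges lie in `M₂`) to a single `M₂`-edge `f - f'`. This keeps both graphs matchings, removes two
vertices, and a colouring of the contracted graph extends to `e'` and then to `e`, because `f`
and `f'` receive different colours.
-/

open Finset

namespace SimpleGraph

variable {V : Type*}

def IsMatchingOn (M : SimpleGraph V) (s : Finset V) : Prop :=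
  ∀ x ∈ s, ∀ y ∈ s, ∀ z ∈ s, M.Adj x y → M.Adj x z → y = z

def IsProperOn {α : Type*} (G : SimpleGraph V) (s : Finset V) (g : V → α) : Prop :=
  ∀ x ∈ s, ∀ y ∈ s, G.Adj x y → g x ≠ g y

lemma IsMatchingOn.mono {M : SimpleGraph V} {s t : Finset V} (h : M.IsMatchingOn s)
    (hts : t ⊆ s) : M.IsMatchingOn t :=
  fun x hx y hy z hz => h x (hts hx) y (hts hy) z (hts hz)

lemma IsMatchingOn.adj_right_of_sup_adj {M₁ M₂ : SimpleGraph V} {s : Finset V} {v w y : V}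
    (h₁ : M₁.IsMatchingOn s) (hv : v ∈ s) (hw : w ∈ s) (hy : y ∈ s) (hvw : M₁.Adj v w)
    (hyw : y ≠ w) (hvy : (M₁ ⊔ M₂).Adj v y) : M₂.Adj v y :=
  hvy.resolve_left fun h => hyw (h₁ v hv y hy w hw h hvw)

lemma IsProperOn.mono {α : Type*} {G H : SimpleGraph V} {s : Finset V} {g : V → α}
    (h : H.IsProperOn s g) (hGH : G ≤ H) : G.IsProperOn s g :=
  fun x hx y hy hxy => h x hx y hy (hGH hxy)

lemma IsProperOn.update_insert [DecidableEq V] {G : SimpleGraph V} {s : Finset V}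
    {g : V → Bool} {v : V} {c : Bool} (hg : G.IsProperOn s g)
    (hc : ∀ y ∈ s, G.Adj v y → g y = c) :
    G.IsProperOn (insert v s) (Function.update g v !c) := by
  have hnbr : ∀ y ∈ insert v s, G.Adj v y → Function.update g v (!c) y = c := by
    intro y hy hvy
    rw [Function.update_of_ne hvy.ne']
    exact hc y ((mem_insert.mp hy).resolve_left hvy.ne') hvy
  intro x hx y hy hxy
  by_cases hxv : x = v
  · subst hxv
    simp [hnbr y hy hxy]
  by_cases hyv : y = v
  · subst hyv
    simp [hnbr x hx hxy.symm]
  rw [Function.update_of_ne hxv, Function.update_of_ne hyv]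
  exact hg x ((mem_insert.mp hx).resolve_left hxv) y ((mem_insert.mp hy).resolve_left hyv) hxy

def bridge (M : SimpleGraph V) (e e' : V) : SimpleGraph V :=
  M ⊔ fromRel fun x y => M.Adj x e ∧ M.Adj e' y

lemma IsMatchingOn.bridge [DecidableEq V] {M : SimpleGraph V} {s : Finset V} {e e' : V}
    (h : M.IsMatchingOn s) (he : e ∈ s) (he' : e' ∈ s) (hne : e ≠ e') :
    (M.bridge e e').IsMatchingOn ((s.erase e).erase e') := by
  intro x hx y hy z hz hxy hxz
  simp only [mem_erase] at hx hy hz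
  simp only [SimpleGraph.bridge, sup_adj, fromRel_adj] at hxy hxz
  unfold IsMatchingOn at h
  grind [Adj.symm]

section Contraction

variable [DecidableEq V] {M₁ M₂ : SimpleGraph V} {s : Finset V} {e e' : V}

lemma exists_color_of_isProperOn_bridge (h₁ : M₁.IsMatchingOn s) (h₂ : M₂.IsMatchingOn s)
    (he : e ∈ s) (he' : e' ∈ s) (hee' : M₁.Adj e e') {g : V → Bool}
    (hg : (M₁ ⊔ M₂.bridge e e').IsProperOn ((s.erase e).erase e') g) :
    ∃ c, (∀ y ∈ (s.erase e).erase e', (M₁ ⊔ M₂).Adj e' y → g y = c) ∧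
      ∀ y ∈ (s.erase e).erase e', (M₁ ⊔ M₂).Adj e y → g y = !c := by
  have hs' : ∀ {y}, y ∈ (s.erase e).erase e' → y ≠ e' ∧ y ≠ e ∧ y ∈ s := by simp
  have hnbr' : ∀ {y}, y ∈ (s.erase e).erase e' → (M₁ ⊔ M₂).Adj e' y → M₂.Adj e' y :=
    fun hy => h₁.adj_right_of_sup_adj he' he (hs' hy).2.2 hee'.symm (hs' hy).2.1
  have hnbr : ∀ {y}, y ∈ (s.erase e).erase e' → (M₁ ⊔ M₂).Adj e y → M₂.Adj e y :=
    fun hy => h₁.adj_right_of_sup_adj he he' (hs' hy).2.2 hee' (hs' hy).1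
  by_cases hf : ∃ f ∈ (s.erase e).erase e', M₂.Adj e f
  · obtain ⟨f, hf, hef⟩ := hf
    refine ⟨!g f, fun y hy he'y => ?_, fun y hy hey => ?_⟩
    · have he'y := hnbr' hy he'y
      have hfy : f ≠ y := by
        rintro rfl
        exact hee'.ne (h₂ f (hs' hf).2.2 e he e' he' hef.symm he'y.symm)
      exact Bool.eq_not.mpr (hg f hf y hy (Or.inr (Or.inr ⟨hfy, Or.inl ⟨hef.symm, he'y⟩⟩))).symm
    · simp [h₂ e he f (hs' hf).2.2 y (hs' hy).2.2 hef (hnbr hy hey)]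
  by_cases hf' : ∃ f' ∈ (s.erase e).erase e', M₂.Adj e' f'
  · obtain ⟨f', hf', he'f'⟩ := hf'
    refine ⟨g f', fun y hy he'y => ?_, fun y hy hey => absurd ⟨y, hy, hnbr hy hey⟩ hf⟩
    rw [h₂ e' he' f' (hs' hf').2.2 y (hs' hy).2.2 he'f' (hnbr' hy he'y)]
  exact ⟨true, fun y hy he'y => absurd ⟨y, hy, hnbr' hy he'y⟩ hf',
    fun y hy hey => absurd ⟨y, hy, hnbr hy hey⟩ hf⟩

lemma exists_isProperOn_of_bridge (h₁ : M₁.IsMatchingOn s) (h₂ : M₂.IsMatchingOn s)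
    (he : e ∈ s) (he' : e' ∈ s) (hee' : M₁.Adj e e') {g : V → Bool}
    (hg : (M₁ ⊔ M₂.bridge e e').IsProperOn ((s.erase e).erase e') g) :
    ∃ g : V → Bool, (M₁ ⊔ M₂).IsProperOn s g := by
  obtain ⟨c, hc', hc⟩ := exists_color_of_isProperOn_bridge h₁ h₂ he he' hee' hg
  have hg' : (M₁ ⊔ M₂).IsProperOn ((s.erase e).erase e') g :=
    hg.mono (sup_le_sup_left le_sup_left _)
  have hce : ∀ y ∈ insert e' ((s.erase e).erase e'), (M₁ ⊔ M₂).Adj e y →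
      Function.update g e' (!c) y = !c := by
    intro y hy hey
    rcases mem_insert.mp hy with rfl | hy
    · simp
    · rw [Function.update_of_ne (ne_of_mem_erase hy)]
      exact hc y hy hey
  have hs : insert e (insert e' ((s.erase e).erase e')) = s := by
    rw [insert_erase (mem_erase.mpr ⟨hee'.ne.symm, he'⟩), insert_erase he]
  refine ⟨Function.update (Function.update g e' !c) e c, hs ▸ ?_⟩
  simpa using (hg'.update_insert hc').update_insert hce

theorem exists_isProperOn_sup_of_isMatchingOn (s : Finset V) (h₁ : M₁.IsMatchingOn s)
    (h₂ : M₂.IsMatchingOn s) : ∃ g : V → Bool, (M₁ ⊔ M₂).IsProperOn s g := by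
  induction s using Finset.strongInduction generalizing M₁ M₂ with
  | H s ih =>
  have contract : ∀ {N₁ N₂ : SimpleGraph V}, N₁.IsMatchingOn s → N₂.IsMatchingOn s →
      (∃ e ∈ s, ∃ e' ∈ s, N₁.Adj e e') → ∃ g : V → Bool, (N₁ ⊔ N₂).IsProperOn s g := by
    rintro N₁ N₂ h₁ h₂ ⟨e, he, e', he', hee'⟩
    have hs' : (s.erase e).erase e' ⊂ s := (erase_subset _ _).trans_ssubset (erase_ssubset he)
    obtain ⟨g, hg⟩ := ih _ hs' (h₁.mono hs'.subset) (h₂.bridge he he' hee'.ne)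
    exact exists_isProperOn_of_bridge h₁ h₂ he he' hee' hg
  by_cases H₁ : ∃ e ∈ s, ∃ e' ∈ s, M₁.Adj e e'
  · exact contract h₁ h₂ H₁
  by_cases H₂ : ∃ e ∈ s, ∃ e' ∈ s, M₂.Adj e e'
  · simpa only [sup_comm] using contract h₂ h₁ H₂
  refine ⟨fun _ => true, fun x hx y hy hxy => ?_⟩
  rcases hxy with hxy | hxy
  exacts [absurd ⟨x, hx, y, hy, hxy⟩ H₁, absurd ⟨x, hx, y, hy, hxy⟩ H₂]

end Contraction

theorem isBipartite_sup_of_subsingleton_neighborSet [Finite V] {M₁ M₂ : SimpleGraph V}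
    (h₁ : ∀ v, (M₁.neighborSet v).Subsingleton) (h₂ : ∀ v, (M₂.neighborSet v).Subsingleton) :
    (M₁ ⊔ M₂).IsBipartite := by
  classical
  have := Fintype.ofFinite V
  obtain ⟨g, hg⟩ := exists_isProperOn_sup_of_isMatchingOn univ
    (fun x _ y _ z _ hy hz => h₁ x hy hz) (fun x _ y _ z _ hy hz => h₂ x hy hz)
  simpa using (Coloring.mk g fun hxy => hg _ (mem_univ _) _ (mem_univ _) hxy).colorable

end SimpleGraph

theorem exists_matching_adj_in_fibers {E X : Type*} [Fintype E] [DecidableEq X] (f : E → X) :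
    ∃ M : SimpleGraph E, (∀ x, (M.neighborSet x).Subsingleton) ∧
      ∀ u, 2 ≤ (univ.filter fun e => f e = u).card → ∃ x y, f x = u ∧ f y = u ∧ M.Adj x y := by
  classical
  have hpairs : ∀ u, ∃ t ⊆ univ.filter (fun e => f e = u),
      t.card = min 2 (univ.filter fun e => f e = u).card :=
    fun u => exists_subset_card_eq (min_le_right _ _)
  choose t ht htcard using hpairs
  have hft : ∀ {x u}, x ∈ t u → f x = u := fun hx => (mem_filter.mp (ht _ hx)).2
  refine ⟨{ Adj := fun x y => x ≠ y ∧ ∃ u, x ∈ t u ∧ y ∈ t u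
            symm := ⟨fun x y ⟨hxy, u, hx, hy⟩ => ⟨hxy.symm, u, hy, hx⟩⟩
            loopless := ⟨fun x h => h.1 rfl⟩ },
    fun x y ⟨hxy, u, hx, hy⟩ z ⟨hxz, w, hx', hz⟩ => ?_, fun u hu => ?_⟩
  · obtain rfl : w = u := (hft hx').symm.trans (hft hx)
    by_contra hyz
    have hsub : {x, y, z} ⊆ t w :=
      insert_subset_iff.mpr ⟨hx, insert_subset_iff.mpr ⟨hy, singleton_subset_iff.mpr hz⟩⟩
    have h3 := card_eq_three.mpr ⟨x, y, z, hxy, hxz, hyz, rfl⟩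
    have := card_le_card hsub
    have := htcard w
    omega
  · obtain ⟨x, y, hxy, hxyt⟩ := card_eq_two.mp ((htcard u).trans (min_eq_left hu))
    have hx : x ∈ t u := by simp [hxyt]
    have hy : y ∈ t u := by simp [hxyt]
    exact ⟨x, y, hft hx, hft hy, hxy, u, hx, hy⟩

lemma exists_eq_true_and_exists_eq_false_of_ne {E : Type*} {g : E → Bool} {p : E → Prop}
    {x y : E} (hx : p x) (hy : p y) (hxy : g x ≠ g y) :
    (∃ e, p e ∧ g e = true) ∧ (∃ e, p e ∧ g e = false) := by
  cases hgx : g x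
  · exact ⟨⟨y, hy, by simpa [hgx] using hxy.symm⟩, ⟨x, hx, hgx⟩⟩
  · exact ⟨⟨x, hx, hgx⟩, ⟨y, hy, by simpa [hgx] using hxy.symm⟩⟩

/-- the edges of a bipartite multigraph can be split into two
classes so that every vertex of degree at least two is incident to an edge of
each class. -/
theorem stmt_16 {E A B : Type*} [Fintype E] [DecidableEq A] [DecidableEq B]
    (a : E → A) (b : E → B) :
    ∃ g : E → Bool,
      (∀ u : A, 2 ≤ (univ.filter (fun e => a e = u)).card →
        (∃ e : E, a e = u ∧ g e = true) ∧ (∃ e : E, a e = u ∧ g e = false)) ∧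
      (∀ v : B, 2 ≤ (univ.filter (fun e => b e = v)).card →
        (∃ e : E, b e = v ∧ g e = true) ∧ (∃ e : E, b e = v ∧ g e = false)) := by
  obtain ⟨M₁, hM₁, hA⟩ := exists_matching_adj_in_fibers a
  obtain ⟨M₂, hM₂, hB⟩ := exists_matching_adj_in_fibers b
  let c := (SimpleGraph.isBipartite_sup_of_subsingleton_neighborSet hM₁ hM₂).toColoring
    (α := Bool) (by simp)
  refine ⟨c, fun u hu => ?_, fun v hv => ?_⟩
  · obtain ⟨x, y, hx, hy, hxy⟩ := hA u hu
    exact exists_eq_true_and_exists_eq_false_of_ne hx hy (c.valid (Or.inl hxy))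
  · obtain ⟨x, y, hx, hy, hxy⟩ := hB v hv
    exact exists_eq_true_and_exists_eq_false_of_ne hx hy (c.valid (Or.inr hxy))
end

section
/- Let a reallocation instance be given with the warehouse constraint dropped (c ≡ ∞) and satisfying size(p) ≤ d⁺(s(p)) and size(p) ≤ d⁻(t(p)) for every p ∈ P. Suppose φ is a schedule with completion time T such that for every w ∈ W and every θ ∈ ℕ: letting D⁺ = {p ∈ P⁺(w) : φ(p) = θ} and letting a₁ and a₂ be the largest and second largest values of size on D⁺ (taken as 0 when D⁺ has fewer than one, resp. two, elements), one has ∑_{p∈D⁺} size(p) ≤ d⁺(w) + a₁ + a₂; and letting D⁻ = {p ∈ P⁻(w) : φ(p) + τ(p) = θ} and b₁, b₂ the largest and second largest values of size on D⁻ (taken as 0 analogously), one has ∑_{p∈D⁻} size(p) ≤ d⁻(w) + b₁ + b₂. Then there exists a schedule ψ satisfying the carry-out and carry-in constraints with completion time at most 6T. -/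
/-!
Order the products by size, breaking ties by an enumeration, and call the two largest products
of a departure class `{p | s p = w ∧ φ p = θ}` or an arrival class
`{p | t p = w ∧ φ p + τ p = θ}` its tops. Colour the products with five colours so that no
product shares its colour with a top of one of its two classes; greedily, from the largest
product down, a product only has to avoid the at most four tops above it in its classes. Put
`ψ = φ + T * c`. As `φ p < T` and `1 ≤ φ p + τ p ≤ T`, every departure or arrival class of `ψ`
is one colour of a class of `φ`. Such a set is either a lone top, whose size fits by
`size p ≤ d(w)`, or misses both tops, and then it weighs at most the class total minus its two
largest sizes, which is at most `d(w)` by hypothesis. Colours are at most `4`, so `ψ` ends by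
`5T`.
-/

open Finset

/-- `nthLargest M i` is the `(i+1)`-st largest element of the multiset `M`
(with multiplicity), or `0` if `M` has fewer than `i+1` elements. -/
noncomputable def nthLargest (M : Multiset ℝ) (i : ℕ) : ℝ :=
  ((M.sort (· ≤ ·)).reverse).getD i 0

theorem nthLargest_eq_getD_sort (M : Multiset ℝ) (i : ℕ) :
    nthLargest M i = (M.sort (· ≥ ·)).getD i 0 := by
  rw [nthLargest]
  congr 1
  refine List.Perm.eq_of_pairwise' (r := (· ≥ ·)) ?_ (Multiset.pairwise_sort _ _) ?_
  · exact List.pairwise_reverse.2 (Multiset.pairwise_sort _ _)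
  · rw [← Multiset.coe_eq_coe, Multiset.coe_reverse, Multiset.sort_eq, Multiset.sort_eq]

theorem nthLargest_cons_zero {a : ℝ} {M : Multiset ℝ} (h : ∀ b ∈ M, b ≤ a) :
    nthLargest (a ::ₘ M) 0 = a := by
  rw [nthLargest_eq_getD_sort, Multiset.sort_cons _ _ _ h]
  rfl

theorem nthLargest_cons_succ {a : ℝ} {M : Multiset ℝ} (h : ∀ b ∈ M, b ≤ a) (i : ℕ) :
    nthLargest (a ::ₘ M) (i + 1) = nthLargest M i := by
  rw [nthLargest_eq_getD_sort, nthLargest_eq_getD_sort, Multiset.sort_cons _ _ _ h]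
  rfl

theorem sum_le_of_subset_of_top_isolated {P : Type*} [DecidableEq P] {size : P → ℝ}
    (hsize : ∀ p, 0 ≤ size p) {K top S : Finset P} {cap : ℝ} (hSK : S ⊆ K)
    (hK : ∑ p ∈ K \ top, size p ≤ cap) (hsingle : ∀ p ∈ K, size p ≤ cap)
    (hiso : ∀ u ∈ S, u ∈ top → S = {u}) :
    ∑ p ∈ S, size p ≤ cap := by
  by_cases h : ∃ u ∈ S, u ∈ top
  · obtain ⟨u, huS, hu⟩ := h
    rw [hiso u huS hu, sum_singleton]
    exact hsingle u (hSK huS)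
  · push Not at h
    refine le_trans (sum_le_sum_of_subset_of_nonneg (fun p hp => ?_) fun p _ _ => hsize p) hK
    exact mem_sdiff.2 ⟨hSK hp, h p hp⟩

theorem eq_mod_and_eq_div_of_add_mul_eq {m T a x θ : ℕ} (ha : a ∈ Set.Ico m (m + T))
    (h : a + T * x = θ) : a = m + (θ - m) % T ∧ x = (θ - m) / T := by
  obtain ⟨hma, haT⟩ := ha
  obtain ⟨hdiv, hmod⟩ := (Nat.div_mod_unique (by omega)).2 (⟨by omega, by omega⟩ :
    a - m + T * x = θ - m ∧ a - m < T)
  omega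

section TopN

variable {P : Type*} [LinearOrder P]

def topN (n : ℕ) (K : Finset P) : Finset P :=
  {u ∈ K | #{q ∈ K | u < q} < n}

theorem topN_subset (n : ℕ) (K : Finset P) : topN n K ⊆ K :=
  filter_subset _ _

@[simp]
theorem topN_zero (K : Finset P) : topN 0 K = ∅ := by
  simp [topN]

@[simp]
theorem topN_empty (n : ℕ) : topN n (∅ : Finset P) = ∅ := by
  simp [topN]

theorem topN_succ_insert {n : ℕ} {a : P} {K : Finset P} (ha : ∀ x ∈ K, x < a) :
    topN (n + 1) (insert a K) = insert a (topN n K) := by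
  have haK : a ∉ K := fun h => lt_irrefl a (ha a h)
  ext u
  rcases eq_or_ne u a with rfl | hua
  · have : ({q ∈ insert u K | u < q} : Finset P) = ∅ :=
      filter_eq_empty_iff.2 fun q hq => not_lt.2 <| by
        rcases mem_insert.1 hq with rfl | hq
        exacts [le_rfl, (ha q hq).le]
    simp [topN, this]
  · simp only [topN, mem_insert, hua, false_or, mem_filter]
    refine and_congr_right fun hu => ?_
    rw [filter_insert, if_pos (ha u hu), card_insert_of_notMem fun h => haK (mem_filter.1 h).1,
      Nat.add_lt_add_iff_right]

theorem card_topN_le (n : ℕ) (K : Finset P) : #(topN n K) ≤ n := by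
  induction K using Finset.induction_on_max generalizing n with
  | empty => simp
  | insert a K ha ih =>
    cases n with
    | zero => simp
    | succ n =>
      rw [topN_succ_insert ha]
      exact (card_insert_le _ _).trans (Nat.succ_le_succ (ih n))

theorem mem_topN_of_lt {n : ℕ} {K : Finset P} {u v : P} (hu : u ∈ topN n K) (hv : v ∈ K)
    (huv : u < v) : v ∈ topN n K := by
  simp only [topN, mem_filter] at hu ⊢
  refine ⟨hv, lt_of_le_of_lt (card_le_card fun q hq => ?_) hu.2⟩
  simp only [mem_filter] at hq ⊢
  exact ⟨hq.1, huv.trans hq.2⟩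

theorem sum_topN_eq_sum_nthLargest {f : P → ℝ} (hf : Monotone f) (n : ℕ) (K : Finset P) :
    ∑ p ∈ topN n K, f p = ∑ i ∈ range n, nthLargest (K.val.map f) i := by
  induction K using Finset.induction_on_max generalizing n with
  | empty => simp [nthLargest]
  | insert a K ha ih =>
    have haK : a ∉ K := fun h => lt_irrefl a (ha a h)
    have hle : ∀ b ∈ K.val.map f, b ≤ f a := by
      simp only [Multiset.mem_map, mem_val]
      rintro _ ⟨x, hx, rfl⟩
      exact hf (ha x hx).le
    cases n with
    | zero => simp
    | succ n =>
      rw [topN_succ_insert ha, sum_insert fun h => haK (topN_subset n K h), sum_range_succ',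
        insert_val_of_notMem haK, Multiset.map_cons, nthLargest_cons_zero hle, ih]
      simp only [nthLargest_cons_succ hle, add_comm]

theorem sum_sdiff_topN_two_le {size : P → ℝ} (hmono : Monotone size) {K : Finset P} {cap : ℝ}
    (hK : ∑ p ∈ K, size p ≤
      cap + nthLargest (K.val.map size) 0 + nthLargest (K.val.map size) 1) :
    ∑ p ∈ K \ topN 2 K, size p ≤ cap := by
  have := sum_sdiff (f := size) (topN_subset 2 K)
  rw [sum_topN_eq_sum_nthLargest hmono, sum_range_succ, sum_range_one] at this
  linarith

end TopN

section

variable {P : Type*} [Fintype P] [LinearOrder P]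

theorem exists_coloring_of_card_le (N : P → Finset P) {k : ℕ} (hN : ∀ v, #(N v) ≤ k) :
    ∃ c : P → Fin (k + 1), ∀ v, ∀ u ∈ N v, v < u → c v ≠ c u := by
  suffices ∀ S : Finset P, ∃ c : P → Fin (k + 1), ∀ v ∈ S, ∀ u ∈ N v, u ∈ S → v < u → c v ≠ c u by
    obtain ⟨c, hc⟩ := this univ
    exact ⟨c, fun v u hu hvu => hc v (mem_univ v) u hu (mem_univ u) hvu⟩
  intro S
  induction S using Finset.induction_on_min with
  | empty => exact ⟨fun _ => 0, by simp⟩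
  | insert a S ha ih =>
    obtain ⟨c, hc⟩ := ih
    obtain ⟨j, -, hj⟩ := exists_mem_notMem_of_card_lt_card (s := (N a).image c) (t := univ)
      (by simpa using card_image_le.trans_lt (Nat.lt_succ_of_le (hN a)))
    refine ⟨Function.update c a j, fun v hv u hu huS hvu => ?_⟩
    have hua : u ≠ a := by
      rintro rfl
      rcases mem_insert.1 hv with rfl | hvS
      exacts [lt_irrefl _ hvu, lt_asymm hvu (ha v hvS)]
    rw [Function.update_of_ne hua]
    rcases mem_insert.1 hv with rfl | hvS
    · rw [Function.update_self]
      exact fun h => hj (h ▸ mem_image_of_mem c hu)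
    · rw [Function.update_of_ne (ha v hvS).ne']
      exact hc v hvS u hu ((mem_insert.1 huS).resolve_left hua) hvu

theorem ne_of_mem_topN {α γ : Type*} [DecidableEq α] {κ : P → α} {c : P → γ} {n : ℕ}
    (hc : ∀ v, ∀ u ∈ topN n {q | κ q = κ v}, v < u → c v ≠ c u)
    {p u : P} (hu : u ∈ topN n {q | κ q = κ p}) (hup : u ≠ p) : c p ≠ c u := by
  rcases hup.lt_or_gt with hlt | hgt
  · -- `p` lies above the top `u` of its own class, so `p` is a top of the class of `u`
    have hκ : κ u = κ p := (mem_filter.1 (topN_subset _ _ hu)).2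
    have hp : p ∈ topN n {q | κ q = κ u} := by
      rw [hκ]
      exact mem_topN_of_lt hu (by simp) hlt
    exact (hc u p hp hlt).symm
  · exact hc p u hu hgt

theorem exists_coloring_ne_topN_two {α β : Type*} [DecidableEq α] [DecidableEq β]
    (κ₁ : P → α) (κ₂ : P → β) :
    ∃ c : P → Fin 5,
      (∀ p, ∀ u ∈ topN 2 {q | κ₁ q = κ₁ p}, u ≠ p → c p ≠ c u) ∧
      (∀ p, ∀ u ∈ topN 2 {q | κ₂ q = κ₂ p}, u ≠ p → c p ≠ c u) := by
  obtain ⟨c, hc⟩ := exists_coloring_of_card_le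
    (fun v => topN 2 {q | κ₁ q = κ₁ v} ∪ topN 2 {q | κ₂ q = κ₂ v}) (k := 4)
    fun v => (card_union_le _ _).trans (add_le_add (card_topN_le _ _) (card_topN_le _ _))
  exact ⟨c, fun p u hu => ne_of_mem_topN (fun v u hu => hc v u (mem_union_left _ hu)) hu,
    fun p u hu => ne_of_mem_topN (fun v u hu => hc v u (mem_union_right _ hu)) hu⟩

theorem sum_filter_add_mul_eq_le {W : Type*} [DecidableEq W] {size : P → ℝ}
    (hsize : ∀ p, 0 ≤ size p) (hmono : Monotone size) (l : P → W) (e c : P → ℕ) {m T : ℕ}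
    (he : ∀ p, e p ∈ Set.Ico m (m + T)) (cap : W → ℝ) (hsingle : ∀ p, size p ≤ cap (l p))
    (hcap : ∀ (w : W) (θ : ℕ),
      ∑ p ∈ univ.filter (fun p => l p = w ∧ e p = θ), size p
        ≤ cap w
          + nthLargest ((univ.filter (fun p => l p = w ∧ e p = θ)).val.map size) 0
          + nthLargest ((univ.filter (fun p => l p = w ∧ e p = θ)).val.map size) 1)
    (hc : ∀ p, ∀ u ∈ topN 2 {q | (l q, e q) = (l p, e p)}, u ≠ p → c p ≠ c u)
    (w : W) (θ : ℕ) :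
    ∑ p ∈ univ.filter (fun p => l p = w ∧ e p + T * c p = θ), size p ≤ cap w := by
  set K : Finset P := {p | l p = w ∧ e p = m + (θ - m) % T}
  have hS : ∀ p ∈ univ.filter (fun p => l p = w ∧ e p + T * c p = θ),
      l p = w ∧ e p = m + (θ - m) % T ∧ c p = (θ - m) / T := by
    intro p hp
    obtain ⟨hl, hθ⟩ := (mem_filter.1 hp).2
    exact ⟨hl, eq_mod_and_eq_div_of_add_mul_eq (he p) hθ⟩
  have hK : ∀ p ∈ K, ({q | (l q, e q) = (l p, e p)} : Finset P) = K := by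
    intro p hp
    obtain ⟨hl, he'⟩ := (mem_filter.1 hp).2
    ext q
    simp [K, hl, he']
  refine sum_le_of_subset_of_top_isolated hsize (K := K) (top := topN 2 K)
    (fun p hp => by simp [K, hS p hp]) (sum_sdiff_topN_two_le hmono (hcap w _))
    (fun p hp => (mem_filter.1 hp).2.1 ▸ hsingle p) fun u hu hutop => ?_
  refine eq_singleton_iff_unique_mem.2 ⟨hu, fun p hp => ?_⟩
  by_contra hpu
  have hpK : p ∈ K := by simp [K, hS p hp]
  exact hc p u (by rwa [hK p hpK]) (Ne.symm hpu) ((hS p hp).2.2.trans (hS u hu).2.2.symm)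

end

theorem stmt_17_general {P W : Type*} [Fintype P] [Nonempty P] [DecidableEq W]
    (s t : P → W)
    (size : P → ℝ) (hsize : ∀ p, 0 ≤ size p)
    (τ : P → ℕ) (hτ : ∀ p, 1 ≤ τ p)
    (dout din : W → ℝ)
    (hout0 : ∀ p, size p ≤ dout (s p)) (hin0 : ∀ p, size p ≤ din (t p))
    (φ : P → ℕ) (T : ℕ)
    (hφT : univ.sup' univ_nonempty (fun p => φ p + τ p) = T)
    (hout : ∀ (w : W) (θ : ℕ),
      ∑ p ∈ univ.filter (fun p => s p = w ∧ φ p = θ), size p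
        ≤ dout w
          + nthLargest ((univ.filter (fun p => s p = w ∧ φ p = θ)).val.map size) 0
          + nthLargest ((univ.filter (fun p => s p = w ∧ φ p = θ)).val.map size) 1)
    (hin : ∀ (w : W) (θ : ℕ),
      ∑ p ∈ univ.filter (fun p => t p = w ∧ φ p + τ p = θ), size p
        ≤ din w
          + nthLargest ((univ.filter (fun p => t p = w ∧ φ p + τ p = θ)).val.map size) 0
          + nthLargest ((univ.filter (fun p => t p = w ∧ φ p + τ p = θ)).val.map size) 1) :
    ∃ ψ : P → ℕ,
      (∀ (w : W) (θ : ℕ),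
        ∑ p ∈ univ.filter (fun p => s p = w ∧ ψ p = θ), size p ≤ dout w) ∧
      (∀ (w : W) (θ : ℕ),
        ∑ p ∈ univ.filter (fun p => t p = w ∧ ψ p + τ p = θ), size p ≤ din w) ∧
      univ.sup' univ_nonempty (fun p => ψ p + τ p) ≤ 6 * T := by
  have hT (p : P) : φ p + τ p ≤ T := hφT ▸ le_sup' (fun q => φ q + τ q) (mem_univ p)
  let _ : LinearOrder P := LinearOrder.lift' (fun p => toLex (size p, Fintype.equivFin P p))
    fun p q h => (Fintype.equivFin P).injective (congrArg Prod.snd (toLex.injective h))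
  have hmono : Monotone size := fun p q => Prod.Lex.monotone_fst _ _
  obtain ⟨c, hc₁, hc₂⟩ :=
    exists_coloring_ne_topN_two (fun p => (s p, φ p)) (fun p => (t p, φ p + τ p))
  refine ⟨fun p => φ p + T * c p, ?_, fun w θ => ?_, sup'_le _ _ fun p _ => ?_⟩
  · exact sum_filter_add_mul_eq_le hsize hmono s φ (fun p => c p) (m := 0) (T := T)
      (fun p => ⟨Nat.zero_le _, by have := hT p; have := hτ p; omega⟩) dout hout0 hout
      fun p u hu hup => Fin.val_injective.ne (hc₁ p u hu hup)
  · have := sum_filter_add_mul_eq_le hsize hmono t (fun p => φ p + τ p) (fun p => c p)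
      (m := 1) (T := T) (fun p => ⟨(hτ p).trans (Nat.le_add_left _ _), by have := hT p; omega⟩)
      din hin0 hin (fun p u hu hup => Fin.val_injective.ne (hc₂ p u hu hup)) w θ
    simpa only [add_right_comm] using this
  · have := Nat.mul_le_mul_left T (Nat.le_of_lt_succ (c p).isLt)
    have := hT p
    dsimp only
    omega

/-- a schedule with completion time `T` that violates the
carry-out (resp. carry-in) capacities by at most the two largest sizes of
simultaneously departing (resp. arriving) products can be converted into a
schedule satisfying the carry-out and carry-in constraints with completion time
at most `6T` (warehouse constraint dropped). -/
theorem stmt_17 {P W : Type*} [Fintype P] [Nonempty P] [Fintype W] [DecidableEq W]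
    (s t : P → W) (hst : ∀ p, s p ≠ t p)
    (size : P → ℝ) (hsize : ∀ p, 0 ≤ size p)
    (τ : P → ℕ) (hτ : ∀ p, 1 ≤ τ p)
    (dout din : W → ℝ)
    (hout0 : ∀ p, size p ≤ dout (s p)) (hin0 : ∀ p, size p ≤ din (t p))
    (φ : P → ℕ) (T : ℕ)
    (hφT : univ.sup' univ_nonempty (fun p => φ p + τ p) = T)
    (hout : ∀ (w : W) (θ : ℕ),
      ∑ p ∈ univ.filter (fun p => s p = w ∧ φ p = θ), size p
        ≤ dout w
          + nthLargest ((univ.filter (fun p => s p = w ∧ φ p = θ)).val.map size) 0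
          + nthLargest ((univ.filter (fun p => s p = w ∧ φ p = θ)).val.map size) 1)
    (hin : ∀ (w : W) (θ : ℕ),
      ∑ p ∈ univ.filter (fun p => t p = w ∧ φ p + τ p = θ), size p
        ≤ din w
          + nthLargest ((univ.filter (fun p => t p = w ∧ φ p + τ p = θ)).val.map size) 0
          + nthLargest ((univ.filter (fun p => t p = w ∧ φ p + τ p = θ)).val.map size) 1) :
    ∃ ψ : P → ℕ,
      (∀ (w : W) (θ : ℕ),
        ∑ p ∈ univ.filter (fun p => s p = w ∧ ψ p = θ), size p ≤ dout w) ∧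
      (∀ (w : W) (θ : ℕ),
        ∑ p ∈ univ.filter (fun p => t p = w ∧ ψ p + τ p = θ), size p ≤ din w) ∧
      univ.sup' univ_nonempty (fun p => ψ p + τ p) ≤ 6 * T :=
  stmt_17_general s t size hsize τ hτ dout din hout0 hin0 φ T hφT hout hin
end

section
/- Let a reallocation instance be given with uniform product size size ≡ 1, with the carry-in and warehouse constraints dropped (d⁻ ≡ ∞ and c ≡ ∞), and with integer carry-out capacities d⁺ : W → ℕ satisfying d⁺(w) ≥ 1 for every w ∈ W. For w ∈ W with P⁺(w) ≠ ∅ and 1 ≤ j ≤ |P⁺(w)|, let τ_{(j)}(w) denote the j-th largest value (counted with multiplicity) of τ on P⁺(w). Then the minimum, over all schedules satisfying the carry-out constraint, of the completion time equals max over w ∈ W with P⁺(w) ≠ ∅ and 1 ≤ j ≤ |P⁺(w)| of ( ⌈j / d⁺(w)⌉ − 1 + τ_{(j)}(w) ). -/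
/-!
Order the products leaving a warehouse `w` by decreasing transit time, and let `r p` be the
(0-based) rank of `p` in this order, so that `τ p = τ_{(r p + 1)}(w)`. Sending `p` at time
`⌊r p / d⁺(w)⌋` ships at most `d⁺(w)` products per step and finishes by
`max_j (⌊j / d⁺(w)⌋ + τ_{(j+1)}(w)) = max_j (⌈(j + 1) / d⁺(w)⌉ - 1 + τ_{(j+1)}(w))`.
Conversely, in any feasible schedule the `j + 1` products of largest transit time at `w` cannot
all leave before time `⌊j / d⁺(w)⌋`, which offers only `⌊j / d⁺(w)⌋ * d⁺(w) ≤ j` slots, and each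
of them travels for at least `τ_{(j+1)}(w)`.
-/

open Finset

def nthLargestNat (M : Multiset ℕ) (i : ℕ) : ℕ :=
  ((M.sort (· ≤ ·)).reverse).getD i 0

def optValue {P W : Type*} [Fintype P] [Fintype W] [DecidableEq W]
    (s : P → W) (τ : P → ℕ) (dout : W → ℕ) : ℕ :=
  (univ.filter (fun w : W => (univ.filter (fun p => s p = w)).Nonempty)).sup
    (fun w => (Finset.range (univ.filter (fun p => s p = w)).card).sup
      (fun j' => ((j' + 1) + dout w - 1) / dout w - 1
        + nthLargestNat ((univ.filter (fun p => s p = w)).val.map τ) j'))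

lemma Nat.add_one_add_sub_one_div_sub_one {d : ℕ} (hd : 0 < d) (j : ℕ) :
    (j + 1 + d - 1) / d - 1 = j / d := by
  rw [show j + 1 + d - 1 = j + d by omega, Nat.add_div_right _ hd, Nat.add_sub_cancel]

lemma Finset.exists_le_of_card_fiber_le {α : Type*} {S : Finset α} {φ : α → ℕ} {d k : ℕ}
    (hφ : ∀ θ, #{p ∈ S | φ p = θ} ≤ d) (hS : k * d < #S) : ∃ p ∈ S, k ≤ φ p := by
  by_contra! h
  obtain ⟨θ, -, hθ⟩ := exists_lt_card_fiber_of_mul_lt_card_of_maps_to (t := range k)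
    (fun p hp => mem_range.2 (h p hp)) (by rwa [card_range])
  exact (hθ.trans_le (hφ θ)).false

lemma Finset.card_filter_div_eq_le {α : Type*} {S : Finset α} {f : α → ℕ}
    (hf : Set.InjOn f S) {d : ℕ} (hd : 0 < d) (θ : ℕ) : #{p ∈ S | f p / d = θ} ≤ d := by
  calc #{p ∈ S | f p / d = θ} ≤ #(Ico (θ * d) (θ * d + d)) := by
        refine card_le_card_of_injOn f (fun p hp => ?_) (hf.mono (filter_subset _ S))
        obtain ⟨-, rfl⟩ := mem_filter.1 hp
        exact mem_Ico.2 ⟨Nat.div_mul_le_self _ _, Nat.lt_div_mul_add hd⟩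
    _ = d := by simp

section SortDesc

variable {α : Type*} (S : Finset α) (τ : α → ℕ)

noncomputable def sortDesc : List α :=
  S.toList.mergeSort (fun a b => decide (τ b ≤ τ a))

lemma sortDesc_perm : (sortDesc S τ).Perm S.toList := List.mergeSort_perm _ _

lemma nodup_sortDesc : (sortDesc S τ).Nodup :=
  (sortDesc_perm S τ).nodup_iff.2 S.nodup_toList

@[simp]
lemma mem_sortDesc {p : α} : p ∈ sortDesc S τ ↔ p ∈ S := by
  rw [(sortDesc_perm S τ).mem_iff, mem_toList]

@[simp]
lemma length_sortDesc : (sortDesc S τ).length = #S := by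
  rw [(sortDesc_perm S τ).length_eq, length_toList]

lemma pairwise_sortDesc : (sortDesc S τ).Pairwise (fun a b => τ b ≤ τ a) := by
  simpa [sortDesc] using List.pairwise_mergeSort (le := fun a b => decide (τ b ≤ τ a))
    (fun a b c hab hbc => by simp only [decide_eq_true_eq] at *; omega)
    (fun a b => by simp only [Bool.or_eq_true, decide_eq_true_eq]; omega) S.toList

lemma reverse_map_sortDesc : ((sortDesc S τ).map τ).reverse = (S.val.map τ).sort (· ≤ ·) := by
  refine List.Perm.eq_of_pairwise' (r := (· ≤ ·)) ?_ (Multiset.pairwise_sort _ _) ?_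
  · rw [List.pairwise_reverse, List.pairwise_map]
    exact pairwise_sortDesc S τ
  · refine (List.reverse_perm _).trans ((sortDesc_perm S τ).map τ |>.trans ?_)
    rw [← Multiset.coe_eq_coe, Multiset.sort_eq, ← Multiset.map_coe, coe_toList]

lemma nthLargestNat_map_eq {j : ℕ} (hj : j < #S) :
    nthLargestNat (S.val.map τ) j = τ ((sortDesc S τ)[j]'(by simpa using hj)) := by
  rw [nthLargestNat, ← reverse_map_sortDesc, List.reverse_reverse,
    List.getD_eq_getElem _ _ (by simpa using hj), List.getElem_map]

lemma getElem_sortDesc_le_of_mem_take {j : ℕ} (hj : j < (sortDesc S τ).length) {q : α}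
    (hq : q ∈ (sortDesc S τ).take (j + 1)) : τ (sortDesc S τ)[j] ≤ τ q := by
  obtain ⟨i, hi, rfl⟩ := List.mem_take_iff_getElem.1 hq
  rcases (Nat.lt_succ_iff.1 (lt_min_iff.1 hi).1).lt_or_eq with hij | rfl
  · exact List.pairwise_iff_getElem.1 (pairwise_sortDesc S τ) i j _ hj hij
  · exact le_rfl

end SortDesc

section SingleSource

variable {α : Type*} [DecidableEq α] (S : Finset α) (τ : α → ℕ)

theorem div_add_nthLargestNat_le_sup {φ : α → ℕ} {d j : ℕ}
    (hφ : ∀ θ, #{p ∈ S | φ p = θ} ≤ d) (hj : j < #S) :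
    j / d + nthLargestNat (S.val.map τ) j ≤ S.sup (fun p => φ p + τ p) := by
  have hjL : j < (sortDesc S τ).length := by simpa using hj
  set T := ((sortDesc S τ).take (j + 1)).toFinset
  have hTS : T ⊆ S := fun q hq =>
    (mem_sortDesc S τ).1 (List.mem_of_mem_take (List.mem_toFinset.1 hq))
  have hT : #T = j + 1 := by
    rw [List.toFinset_card_of_nodup ((nodup_sortDesc S τ).sublist (List.take_sublist _ _)),
      List.length_take, min_eq_left hjL]
  obtain ⟨q, hqT, hjq⟩ := exists_le_of_card_fiber_le (S := T) (k := j / d)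
    (fun θ => (card_le_card (filter_subset_filter _ hTS)).trans (hφ θ))
    (by rw [hT]; exact Nat.lt_succ_of_le (Nat.div_mul_le_self j d))
  calc j / d + nthLargestNat (S.val.map τ) j = j / d + τ (sortDesc S τ)[j] := by
        rw [nthLargestNat_map_eq S τ hj]
    _ ≤ φ q + τ q :=
        add_le_add hjq (getElem_sortDesc_le_of_mem_take S τ hjL (List.mem_toFinset.1 hqT))
    _ ≤ S.sup (fun p => φ p + τ p) := le_sup (f := fun p => φ p + τ p) (hTS hqT)

noncomputable def rankDesc (p : α) : ℕ := (sortDesc S τ).idxOf p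

lemma rankDesc_lt_card {p : α} (hp : p ∈ S) : rankDesc S τ p < #S := by
  simpa [rankDesc] using List.idxOf_lt_length_iff.2 ((mem_sortDesc S τ).2 hp)

lemma nthLargestNat_rankDesc {p : α} (hp : p ∈ S) :
    nthLargestNat (S.val.map τ) (rankDesc S τ p) = τ p := by
  rw [nthLargestNat_map_eq S τ (rankDesc_lt_card S τ hp)]
  simp [rankDesc, List.getElem_idxOf]

lemma rankDesc_injOn : Set.InjOn (rankDesc S τ) S := fun _ hp _ _ h =>
  (List.idxOf_inj ((mem_sortDesc S τ).2 hp)).1 h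

lemma card_filter_rankDesc_div_eq_le {d : ℕ} (hd : 0 < d) (θ : ℕ) :
    #{p ∈ S | rankDesc S τ p / d = θ} ≤ d :=
  card_filter_div_eq_le (rankDesc_injOn S τ) hd θ

lemma rankDesc_div_add_le_sup {p : α} (hp : p ∈ S) (d : ℕ) :
    rankDesc S τ p / d + τ p ≤
      (range #S).sup (fun j => j / d + nthLargestNat (S.val.map τ) j) := by
  exact le_sup_of_le (mem_range.2 (rankDesc_lt_card S τ hp))
    (by rw [nthLargestNat_rankDesc S τ hp])

end SingleSource

section Schedule

variable {P W : Type*} [Fintype P] [DecidableEq W] (s : P → W) (τ : P → ℕ)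
  {dout : W → ℕ}

lemma optValue_eq_sup_div [Fintype W] (hd : ∀ w, 1 ≤ dout w) :
    optValue s τ dout = ({w | ({p | s p = w} : Finset P).Nonempty} : Finset W).sup fun w =>
      (range #{p | s p = w}).sup fun j =>
        j / dout w + nthLargestNat (({p | s p = w} : Finset P).val.map τ) j :=
  sup_congr rfl fun w _ => sup_congr rfl fun j _ => by
    rw [Nat.add_one_add_sub_one_div_sub_one (hd w)]

theorem optValue_le_sup' [Nonempty P] [Fintype W] (hd : ∀ w, 1 ≤ dout w) (φ : P → ℕ)
    (hφ : ∀ w θ, #{p | s p = w ∧ φ p = θ} ≤ dout w) :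
    optValue s τ dout ≤ univ.sup' univ_nonempty (fun p => φ p + τ p) := by
  classical
  rw [optValue_eq_sup_div s τ hd]
  refine Finset.sup_le fun w _ => Finset.sup_le fun j hj => ?_
  calc _ ≤ ({p | s p = w} : Finset P).sup (fun p => φ p + τ p) :=
        div_add_nthLargestNat_le_sup _ τ (fun θ => by simpa [filter_filter] using hφ w θ)
          (mem_range.1 hj)
    _ ≤ _ := Finset.sup_le fun p _ => le_sup' (fun p => φ p + τ p) (mem_univ p)

variable [DecidableEq P]

noncomputable def greedySchedule (dout : W → ℕ) (p : P) : ℕ :=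
  rankDesc {q | s q = s p} τ p / dout (s p)

lemma card_greedySchedule_le (hd : ∀ w, 1 ≤ dout w) (w : W) (θ : ℕ) :
    #{p | s p = w ∧ greedySchedule s τ dout p = θ} ≤ dout w := by
  have hsource : ({p | s p = w ∧ greedySchedule s τ dout p = θ} : Finset P) =
      {p ∈ ({q | s q = w} : Finset P) | rankDesc {q | s q = w} τ p / dout w = θ} := by
    ext p
    simp only [mem_filter, mem_univ, true_and]
    exact and_congr_right fun hw => by subst hw; rfl
  rw [hsource]
  exact card_filter_rankDesc_div_eq_le _ τ (hd w) θ

lemma greedySchedule_add_le_optValue [Fintype W] (hd : ∀ w, 1 ≤ dout w) (p : P) :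
    greedySchedule s τ dout p + τ p ≤ optValue s τ dout := by
  have hp : p ∈ ({q | s q = s p} : Finset P) := by simp
  rw [optValue_eq_sup_div s τ hd]
  exact le_sup_of_le (by simpa using ⟨p, hp⟩) (rankDesc_div_add_le_sup _ τ hp _)

end Schedule

theorem stmt_18_general {P W : Type*} [Fintype P] [Nonempty P] [Fintype W] [DecidableEq W]
    (s : P → W)
    (τ : P → ℕ)
    (dout : W → ℕ) (hd : ∀ w, 1 ≤ dout w) :
    (∃ φ : P → ℕ,
        (∀ (w : W) (θ : ℕ),
          (univ.filter (fun p => s p = w ∧ φ p = θ)).card ≤ dout w) ∧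
        univ.sup' univ_nonempty (fun p => φ p + τ p) = optValue s τ dout) ∧
    (∀ φ : P → ℕ,
        (∀ (w : W) (θ : ℕ),
          (univ.filter (fun p => s p = w ∧ φ p = θ)).card ≤ dout w) →
        optValue s τ dout ≤ univ.sup' univ_nonempty (fun p => φ p + τ p)) := by
  classical
  have feasible := card_greedySchedule_le s τ hd
  refine ⟨⟨greedySchedule s τ dout, feasible, le_antisymm ?_ ?_⟩, optValue_le_sup' s τ hd⟩
  · exact sup'_le _ _ fun p _ => greedySchedule_add_le_optValue s τ hd p
  · exact optValue_le_sup' s τ hd _ feasible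

/-- with unit product sizes, integral carry-out capacities, and
the carry-in and warehouse constraints dropped, the minimum completion time over
all carry-out-feasible schedules equals
`max_{w : P⁺(w) ≠ ∅, 1 ≤ j ≤ |P⁺(w)|} (⌈j / d⁺(w)⌉ - 1 + τ_{(j)}(w))`. -/
theorem stmt_18 {P W : Type*} [Fintype P] [Nonempty P] [Fintype W] [DecidableEq W]
    (s t : P → W) (hst : ∀ p, s p ≠ t p)
    (τ : P → ℕ) (hτ : ∀ p, 1 ≤ τ p)
    (dout : W → ℕ) (hd : ∀ w, 1 ≤ dout w) :
    (∃ φ : P → ℕ,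
        (∀ (w : W) (θ : ℕ),
          (univ.filter (fun p => s p = w ∧ φ p = θ)).card ≤ dout w) ∧
        univ.sup' univ_nonempty (fun p => φ p + τ p) = optValue s τ dout) ∧
    (∀ φ : P → ℕ,
        (∀ (w : W) (θ : ℕ),
          (univ.filter (fun p => s p = w ∧ φ p = θ)).card ≤ dout w) →
        optValue s τ dout ≤ univ.sup' univ_nonempty (fun p => φ p + τ p)) :=
  stmt_18_general s τ dout hd
end
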